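/- arXiv:1904.10052 — 13 statements merged into one kernel-verified Lean document; each statement's English description precedes it below -/
import Mathlib

section
/- Let n ≥ 1 and let y = (y_1,…,y_{n-1},q) ∈ ℂ^n with |y_{n-j}| < C(n,j) for some 1 ≤ j ≤ n-1, where C(n,j) is the binomial coefficient. Then the supremum over z in the closed unit disk of |(C(n,j)·q·z − y_j)/(y_{n-j}·z − C(n,j))| equals (C(n,j)·|y_j − conj(y_{n-j})·q| + |y_j·y_{n-j} − C(n,j)²·q|)/(C(n,j)² − |y_{n-j}|²). -/
open Complex ComplexConjugate Metric

/-!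
For `‖c‖ < ‖d‖` and `D = ‖d‖² - ‖c‖²`, the Möbius map `(a z + b) / (c z + d)` splits as
`(w + k · B z) / D` with `w = b d̄ - a c̄`, `k = a d - b c` and `B z = (d̄ z + c̄) / (c z + d)`.
Since `‖c z + d‖² - ‖d̄ z + c̄‖² = D (1 - ‖z‖²)`, `B` maps the closed disk into itself and the
unit circle onto itself, so the supremum is `(‖w‖ + ‖k‖) / D`, attained where `k · B z` points
in the direction of `w`.
-/

namespace Complex

lemma normSq_mul_add_sub_normSq_conj_mul_add (c d z : ℂ) :
    normSq (c * z + d) - normSq (conj d * z + conj c)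
      = (normSq d - normSq c) * (1 - normSq z) := by
  have hre : (c * z * conj d).re = (conj d * z * conj (conj c)).re := by
    rw [conj_conj]; ring_nf
  simp only [normSq_add, normSq_mul, normSq_conj, hre]
  ring

lemma norm_conj_mul_add_conj_le (c d z : ℂ) (h : ‖c‖ ≤ ‖d‖) (hz : ‖z‖ ≤ 1) :
    ‖conj d * z + conj c‖ ≤ ‖c * z + d‖ := by
  have hcd : normSq c ≤ normSq d := by
    rw [← Complex.sq_norm, ← Complex.sq_norm]; gcongr
  have hz' : normSq z ≤ 1 := by
    rw [← Complex.sq_norm]; exact pow_le_one₀ (norm_nonneg z) hz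
  have := normSq_mul_add_sub_normSq_conj_mul_add c d z
  rw [← Complex.sq_norm, ← Complex.sq_norm] at this
  refine (pow_le_pow_iff_left₀ (norm_nonneg _) (norm_nonneg _) two_ne_zero).1 ?_
  nlinarith [mul_nonneg (sub_nonneg.2 hcd) (sub_nonneg.2 hz')]

lemma mul_add_ne_zero_of_norm_lt {c d z : ℂ} (h : ‖c‖ < ‖d‖) (hz : ‖z‖ ≤ 1) :
    c * z + d ≠ 0 := by
  intro h0
  have : ‖d‖ ≤ ‖c‖ := by
    calc ‖d‖ = ‖c * z‖ := by rw [eq_neg_of_add_eq_zero_right h0, norm_neg]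
      _ ≤ ‖c‖ := by rw [norm_mul]; exact mul_le_of_le_one_right (norm_nonneg c) hz
  linarith

lemma exists_norm_eq_one_conj_mul_add_eq {c d : ℂ} (h : ‖c‖ < ‖d‖) {v : ℂ} (hv : ‖v‖ = 1) :
    ∃ z : ℂ, ‖z‖ = 1 ∧ conj d * z + conj c = v * (c * z + d) := by
  have hden : conj d - v * c ≠ 0 := by
    intro h0
    have := congrArg norm (sub_eq_zero.1 h0)
    rw [norm_conj, norm_mul, hv, one_mul] at this
    exact h.ne' this
  have hvv : v * conj v = 1 := by rw [mul_conj', hv]; norm_num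
  have hnum : v * d - conj c = v * conj (conj d - v * c) := by
    rw [map_sub, map_mul, conj_conj]
    linear_combination conj c * hvv
  refine ⟨(v * d - conj c) / (conj d - v * c), ?_, ?_⟩
  · rw [hnum, norm_div, norm_mul, norm_conj, hv, one_mul, div_self (norm_ne_zero_iff.2 hden)]
  · field_simp
    ring

section Mobius

variable {a b c d : ℂ}

lemma norm_mobius_eq (h : ‖c‖ < ‖d‖) {z : ℂ} (hz : ‖z‖ ≤ 1) :
    ‖(a * z + b) / (c * z + d)‖
      = ‖(b * conj d - a * conj c) + (a * d - b * c) * ((conj d * z + conj c) / (c * z + d))‖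
          / (‖d‖ ^ 2 - ‖c‖ ^ 2) := by
  have hz0 := mul_add_ne_zero_of_norm_lt h hz
  have hD : 0 < ‖d‖ ^ 2 - ‖c‖ ^ 2 := sub_pos.2 (pow_lt_pow_left₀ h (norm_nonneg c) two_ne_zero)
  have hD' : ((‖d‖ ^ 2 - ‖c‖ ^ 2 : ℝ) : ℂ) ≠ 0 := ofReal_ne_zero.2 hD.ne'
  rw [← Real.norm_of_nonneg hD.le, ← norm_real, ← norm_div]
  congr 1
  rw [eq_div_iff hD', mul_div_assoc', add_div' _ _ _ hz0, div_mul_eq_mul_div, div_left_inj' hz0]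
  push_cast
  rw [← mul_conj', ← mul_conj']
  ring

lemma norm_mobius_le (h : ‖c‖ < ‖d‖) {z : ℂ} (hz : ‖z‖ ≤ 1) :
    ‖(a * z + b) / (c * z + d)‖
      ≤ (‖b * conj d - a * conj c‖ + ‖a * d - b * c‖) / (‖d‖ ^ 2 - ‖c‖ ^ 2) := by
  have hB : ‖(conj d * z + conj c) / (c * z + d)‖ ≤ 1 := by
    rw [norm_div]
    exact div_le_one_of_le₀ (norm_conj_mul_add_conj_le c d z h.le hz) (norm_nonneg _)
  rw [norm_mobius_eq h hz]
  gcongr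
  · exact sub_nonneg.2 (pow_le_pow_left₀ (norm_nonneg c) h.le 2)
  calc _ ≤ ‖b * conj d - a * conj c‖ + ‖a * d - b * c‖ * ‖(conj d * z + conj c) / (c * z + d)‖ := by
        rw [← norm_mul]; exact norm_add_le _ _
    _ ≤ ‖b * conj d - a * conj c‖ + ‖a * d - b * c‖ := by
        gcongr
        exact mul_le_of_le_one_right (norm_nonneg _) hB

lemma exists_norm_eq_one_norm_mobius_eq (h : ‖c‖ < ‖d‖) :
    ∃ z : ℂ, ‖z‖ = 1 ∧ ‖(a * z + b) / (c * z + d)‖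
      = (‖b * conj d - a * conj c‖ + ‖a * d - b * c‖) / (‖d‖ ^ 2 - ‖c‖ ^ 2) := by
  set w := b * conj d - a * conj c
  set k := a * d - b * c
  set v := exp ((arg w - arg k : ℝ) * I)
  have hkv : k * v = ‖k‖ * exp (arg w * I) := by
    conv_lhs => rw [← norm_mul_exp_arg_mul_I k]
    rw [mul_assoc, ← exp_add]
    push_cast
    ring_nf
  have hsum : w + k * v = ((‖w‖ + ‖k‖ : ℝ) : ℂ) * exp (arg w * I) := by
    rw [hkv, ofReal_add, add_mul, norm_mul_exp_arg_mul_I]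
  obtain ⟨z, hz, hzv⟩ := exists_norm_eq_one_conj_mul_add_eq h (norm_exp_ofReal_mul_I _)
  have hB : (conj d * z + conj c) / (c * z + d) = v := by
    rw [hzv, mul_div_cancel_right₀ _ (mul_add_ne_zero_of_norm_lt h hz.le)]
  refine ⟨z, hz, ?_⟩
  rw [norm_mobius_eq h hz.le, hB, hsum, norm_mul, norm_exp_ofReal_mul_I, mul_one, norm_real,
    Real.norm_of_nonneg (by positivity)]

theorem sSup_norm_mobius_image_closedBall (h : ‖c‖ < ‖d‖) :
    sSup ((fun z : ℂ => ‖(a * z + b) / (c * z + d)‖) '' closedBall 0 1)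
      = (‖b * conj d - a * conj c‖ + ‖a * d - b * c‖) / (‖d‖ ^ 2 - ‖c‖ ^ 2) := by
  obtain ⟨z, hz, hval⟩ := exists_norm_eq_one_norm_mobius_eq (a := a) (b := b) h
  refine IsGreatest.csSup_eq ⟨⟨z, mem_closedBall_zero_iff.2 hz.le, hval⟩, ?_⟩
  rintro _ ⟨z, hz, rfl⟩
  exact norm_mobius_le h (mem_closedBall_zero_iff.1 hz)

end Mobius

end Complex

theorem stmt0_general (n j : ℕ)
    (yj ynj q : ℂ) (hb : ‖ynj‖ < (n.choose j : ℝ)) :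
    sSup ((fun z : ℂ =>
        ‖((n.choose j : ℂ) * q * z - yj) / (ynj * z - (n.choose j : ℂ))‖) ''
      closedBall (0 : ℂ) 1)
    = ((n.choose j : ℝ) * ‖yj - (starRingEnd ℂ) ynj * q‖ +
        ‖yj * ynj - (n.choose j : ℂ) ^ 2 * q‖) /
      ((n.choose j : ℝ) ^ 2 - (‖ynj‖) ^ 2) := by
  set N : ℂ := (n.choose j : ℂ)
  have hN : ‖-N‖ = (n.choose j : ℝ) := by rw [norm_neg, norm_natCast]
  have key := sSup_norm_mobius_image_closedBall (a := N * q) (b := -yj) (hN ▸ hb)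
  simp only [← sub_eq_add_neg, hN] at key
  rw [key]
  congr 2
  · rw [← norm_natCast (n.choose j), ← norm_mul]
    congr 1
    simp only [map_neg, conj_natCast, N]
    ring
  · congr 1
    ring

theorem stmt0 (n j : ℕ) (hn : 1 ≤ n) (hj1 : 1 ≤ j) (hjn : j ≤ n - 1)
    (yj ynj q : ℂ) (hb : ‖ynj‖ < (n.choose j : ℝ)) :
    sSup ((fun z : ℂ =>
        ‖((n.choose j : ℂ) * q * z - yj) / (ynj * z - (n.choose j : ℂ))‖) ''
      closedBall (0 : ℂ) 1)
    = ((n.choose j : ℝ) * ‖yj - (starRingEnd ℂ) ynj * q‖ +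
        ‖yj * ynj - (n.choose j : ℂ) ^ 2 * q‖) /
      ((n.choose j : ℝ) ^ 2 - (‖ynj‖) ^ 2) :=
  stmt0_general n j yj ynj q hb
end

section
/- For y = (y_1,…,y_{n-1},q) ∈ ℂ^n and 1 ≤ j ≤ n-1, with C = C(n,j) the binomial coefficient, the condition C·|y_j − conj(y_{n-j})·q| + |y_j·y_{n-j} − C²·q| < C² − |y_{n-j}|² implies |y_{n-j} − conj(y_j)·q| + |y_j − conj(y_{n-j})·q| < C·(1 − |q|²) and |q| < 1. -/
/-!
Write `y_j = c a`, `y_{n-j} = c b` with `c = C(n, j)`; the hypothesis becomes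
`|a - b̄q| + |ab - q| < 1 - |b|²`. For `|ζ| = 1` we have `|1 - b̄ζ| = |ζ - b|`, so the identity
`(aζ - q)(1 - |b|²) = (ab - q)(1 - b̄ζ) + (ζ - b)(a - b̄q)` gives `|aζ - q| < |ζ - b|` on the unit
circle. Expanding both squares and taking `ζ` in the direction of `v = b - āq` yields
`2|v| < 1 + |b|² - |a|² - |q|²`. With `u = a - b̄q` one has `|u|² - |v|² = (|a|² - |b|²)(1 - |q|²)`,
and elementary inequalities give `|q| < 1` and `2|u| < 1 + |a|² - |b|² - |q|²`; adding the bounds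
on `2|u|` and `2|v|` gives the claim.
-/

open Complex ComplexConjugate

theorem add_lt_one_sub_sq_and_lt_one_of_two_mul_lt {A B Q U V : ℝ} (hA : 0 ≤ A) (hB : 0 ≤ B)
    (hB1 : B < 1) (hBAQ : |B - A * Q| ≤ V) (hV : 2 * V < 1 + B ^ 2 - A ^ 2 - Q ^ 2)
    (hUV : U ^ 2 - V ^ 2 = (A ^ 2 - B ^ 2) * (1 - Q ^ 2)) :
    V + U < 1 - Q ^ 2 ∧ Q < 1 := by
  obtain ⟨hBAQ₁, hBAQ₂⟩ := abs_le.1 hBAQ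
  have hsum : A + Q < 1 + B := by nlinarith
  have hdiff : |A - Q| < 1 - B := by
    rw [← abs_of_pos (sub_pos.2 hB1)]
    exact sq_lt_sq.1 (by nlinarith)
  obtain ⟨hdiff₁, hdiff₂⟩ := abs_lt.1 hdiff
  have hQ1 : Q < 1 := by linarith
  have hpos : 0 < 1 - Q ^ 2 + A ^ 2 - B ^ 2 := by
    rcases le_total Q A with hQA | hAQ
    · nlinarith
    · nlinarith [mul_nonneg (sub_nonneg.2 hAQ) (sub_nonneg.2 hQ1.le)]
  have hU' : 2 * U < 1 - Q ^ 2 + A ^ 2 - B ^ 2 := by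
    refine lt_of_pow_lt_pow_left₀ 2 hpos.le ?_
    have hV0 : 0 ≤ V := (abs_nonneg _).trans hBAQ
    nlinarith
  exact ⟨by linarith, hQ1⟩

namespace Complex

theorem norm_one_sub_conj_mul_eq_norm_sub {ζ : ℂ} (hζ : ‖ζ‖ = 1) (b : ℂ) :
    ‖1 - conj b * ζ‖ = ‖ζ - b‖ := by
  have hconj : 1 - conj b * ζ = ζ * conj (ζ - b) := by
    rw [map_sub, mul_sub, mul_conj', hζ]
    push_cast
    ring
  rw [hconj, norm_mul, norm_conj, hζ, one_mul]

theorem norm_mul_sub_lt_norm_sub_of_norm_eq_one {a b q : ℂ}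
    (h : ‖a - conj b * q‖ + ‖a * b - q‖ < 1 - ‖b‖ ^ 2) {ζ : ℂ} (hζ : ‖ζ‖ = 1) :
    ‖a * ζ - q‖ < ‖ζ - b‖ := by
  have hb : 0 < 1 - ‖b‖ ^ 2 := by
    linarith [norm_nonneg (a - conj b * q), norm_nonneg (a * b - q)]
  have hζb : 0 < ‖ζ - b‖ := by
    have := norm_sub_norm_le ζ b
    nlinarith [norm_nonneg b]
  have hnorm : ‖1 - conj b * b‖ = 1 - ‖b‖ ^ 2 := by
    rw [conj_mul', ← ofReal_pow, ← ofReal_one, ← ofReal_sub, norm_real, Real.norm_of_nonneg hb.le]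
  have hid : (a * ζ - q) * (1 - conj b * b) =
      (a * b - q) * (1 - conj b * ζ) + (ζ - b) * (a - conj b * q) := by
    ring
  refine lt_of_mul_lt_mul_right ?_ hb.le
  calc ‖a * ζ - q‖ * (1 - ‖b‖ ^ 2)
      = ‖(a * b - q) * (1 - conj b * ζ) + (ζ - b) * (a - conj b * q)‖ := by
        rw [← hid, norm_mul, hnorm]
    _ ≤ (‖a * b - q‖ + ‖a - conj b * q‖) * ‖ζ - b‖ := by
        refine (norm_add_le _ _).trans_eq ?_
        rw [norm_mul, norm_mul, norm_one_sub_conj_mul_eq_norm_sub hζ]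
        ring
    _ < (1 - ‖b‖ ^ 2) * ‖ζ - b‖ := by gcongr; linarith
    _ = ‖ζ - b‖ * (1 - ‖b‖ ^ 2) := mul_comm _ _

theorem norm_sub_sq_sub_norm_mul_sub_sq {ζ : ℂ} (hζ : ‖ζ‖ = 1) (a b q : ℂ) :
    ‖ζ - b‖ ^ 2 - ‖a * ζ - q‖ ^ 2 =
      1 + ‖b‖ ^ 2 - ‖a‖ ^ 2 - ‖q‖ ^ 2 - 2 * (ζ * conj (b - conj a * q)).re := by
  have hζ' : ζ.re * ζ.re + ζ.im * ζ.im = 1 := by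
    rw [← normSq_apply, ← Complex.sq_norm, hζ, one_pow]
  simp only [Complex.sq_norm, normSq_apply, sub_re, sub_im, mul_re, mul_im, conj_re, conj_im,
    map_sub, map_mul]
  linear_combination (1 - a.re * a.re - a.im * a.im) * hζ'

theorem two_mul_norm_sub_conj_mul_lt {a b q : ℂ}
    (H : ∀ ζ : ℂ, ‖ζ‖ = 1 → ‖a * ζ - q‖ < ‖ζ - b‖) :
    2 * ‖b - conj a * q‖ < 1 + ‖b‖ ^ 2 - ‖a‖ ^ 2 - ‖q‖ ^ 2 := by
  set v := b - conj a * q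
  set ζ := exp (v.arg * I)
  have hζ : ‖ζ‖ = 1 := norm_exp_ofReal_mul_I _
  have hζv : (ζ * conj v).re = ‖v‖ := by
    conv_lhs => rw [← norm_mul_exp_arg_mul_I v]
    rw [map_mul, conj_ofReal, mul_left_comm, mul_conj', hζ]
    simp
  have := norm_sub_sq_sub_norm_mul_sub_sq hζ a b q
  have := H ζ hζ
  nlinarith [norm_nonneg (a * ζ - q)]

theorem norm_sub_conj_mul_sq_sub_norm_sub_conj_mul_sq (a b q : ℂ) :
    ‖a - conj b * q‖ ^ 2 - ‖b - conj a * q‖ ^ 2 = (‖a‖ ^ 2 - ‖b‖ ^ 2) * (1 - ‖q‖ ^ 2) := by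
  simp only [Complex.sq_norm, normSq_apply, sub_re, sub_im, mul_re, mul_im, conj_re, conj_im]
  ring

theorem norm_sub_conj_mul_add_norm_sub_conj_mul_lt {a b q : ℂ}
    (h : ‖a - conj b * q‖ + ‖a * b - q‖ < 1 - ‖b‖ ^ 2) :
    ‖b - conj a * q‖ + ‖a - conj b * q‖ < 1 - ‖q‖ ^ 2 ∧ ‖q‖ < 1 := by
  have hb : ‖b‖ < 1 := by
    nlinarith [norm_nonneg (a - conj b * q), norm_nonneg (a * b - q), norm_nonneg b]
  have hv : 2 * ‖b - conj a * q‖ < 1 + ‖b‖ ^ 2 - ‖a‖ ^ 2 - ‖q‖ ^ 2 :=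
    two_mul_norm_sub_conj_mul_lt fun _ hζ ↦ norm_mul_sub_lt_norm_sub_of_norm_eq_one h hζ
  have hbaq : |‖b‖ - ‖a‖ * ‖q‖| ≤ ‖b - conj a * q‖ := by
    simpa only [norm_mul, norm_conj] using abs_norm_sub_norm_le b (conj a * q)
  exact add_lt_one_sub_sq_and_lt_one_of_two_mul_lt (norm_nonneg a) (norm_nonneg b) hb hbaq hv
    (norm_sub_conj_mul_sq_sub_norm_sub_conj_mul_sq a b q)

theorem norm_sub_conj_mul_add_norm_sub_conj_mul_lt_mul {c : ℝ} (hc₀ : 0 ≤ c) {y z q : ℂ}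
    (h : c * ‖y - conj z * q‖ + ‖y * z - (c : ℂ) ^ 2 * q‖ < c ^ 2 - ‖z‖ ^ 2) :
    ‖z - conj y * q‖ + ‖y - conj z * q‖ < c * (1 - ‖q‖ ^ 2) ∧ ‖q‖ < 1 := by
  have hc : 0 < c := by
    refine hc₀.lt_of_ne' ?_
    rintro rfl
    linarith [norm_nonneg (y * z - ((0 : ℝ) : ℂ) ^ 2 * q), sq_nonneg ‖z‖]
  have hc' : (c : ℂ) ≠ 0 := ofReal_ne_zero.2 hc.ne'
  obtain ⟨a, rfl⟩ : ∃ a, y = c * a := ⟨y / c, by field_simp⟩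
  obtain ⟨b, rfl⟩ : ∃ b, z = c * b := ⟨z / c, by field_simp⟩
  have hnorm (x : ℂ) : ‖(c : ℂ) * x‖ = c * ‖x‖ := by
    rw [norm_mul, norm_real, Real.norm_of_nonneg hc.le]
  have hconj (x w : ℂ) : c * x - conj (c * w) * q = c * (x - conj w * q) := by
    rw [map_mul, conj_ofReal]
    ring
  have hprod : c * a * (c * b) - (c : ℂ) ^ 2 * q = c ^ 2 * (a * b - q) := by ring
  rw [hconj, hprod, hnorm, ← ofReal_pow, norm_mul, norm_real, Real.norm_of_nonneg (by positivity),
    hnorm] at h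
  have h₁ : ‖a - conj b * q‖ + ‖a * b - q‖ < 1 - ‖b‖ ^ 2 := by
    have : c ^ 2 * (‖a - conj b * q‖ + ‖a * b - q‖) < c ^ 2 * (1 - ‖b‖ ^ 2) := by linarith
    exact lt_of_mul_lt_mul_left this (by positivity)
  obtain ⟨h₂, hq⟩ := norm_sub_conj_mul_add_norm_sub_conj_mul_lt h₁
  refine ⟨?_, hq⟩
  rw [hconj, hconj, hnorm, hnorm]
  nlinarith

end Complex

theorem stmt1_general (n j : ℕ) (yj ynj q : ℂ)
    (h : (n.choose j : ℝ) * ‖yj - (starRingEnd ℂ) ynj * q‖ +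
        ‖yj * ynj - (n.choose j : ℂ) ^ 2 * q‖ <
      (n.choose j : ℝ) ^ 2 - ‖ynj‖ ^ 2) :
    ‖ynj - (starRingEnd ℂ) yj * q‖ +
        ‖yj - (starRingEnd ℂ) ynj * q‖ <
      (n.choose j : ℝ) * (1 - ‖q‖ ^ 2) ∧ ‖q‖ < 1 :=
  norm_sub_conj_mul_add_norm_sub_conj_mul_lt_mul (Nat.cast_nonneg _) (by exact_mod_cast h)

theorem stmt1 (n j : ℕ) (hn : 1 ≤ n) (hj1 : 1 ≤ j) (hjn : j ≤ n - 1) (yj ynj q : ℂ)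
    (h : (n.choose j : ℝ) * ‖yj - (starRingEnd ℂ) ynj * q‖ +
        ‖yj * ynj - (n.choose j : ℂ) ^ 2 * q‖ <
      (n.choose j : ℝ) ^ 2 - ‖ynj‖ ^ 2) :
    ‖ynj - (starRingEnd ℂ) yj * q‖ +
        ‖yj - (starRingEnd ℂ) ynj * q‖ <
      (n.choose j : ℝ) * (1 - ‖q‖ ^ 2) ∧ ‖q‖ < 1 :=
  stmt1_general n j yj ynj q h
end

section
/- Let ψ = (ψ_1,…,ψ_n) : 𝔻 → ℂ^n be analytic with ψ(0) = 0 and ψ'(0) = x = (x_1,…,x_n). Fix 1 ≤ j ≤ n-1 and set C = C(n,j). If for every λ ∈ 𝔻 \ {0}, C·|ψ_j(λ) − conj(ψ_{n-j}(λ))·ψ_n(λ)| + |ψ_j(λ)·ψ_{n-j}(λ) − C²·ψ_n(λ)| ≤ |λ|·(C² − |ψ_{n-j}(λ)|²), then |x_j|/C + |x_n| ≤ 1. -/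
/-! Write `a, b, c` for `ψ_j(λ), ψ_{n-j}(λ), ψ_n(λ)`. Two triangle inequalities,
`|a| ≤ |a - b̄c| + |b||c|` and `C²|c| ≤ |ab - C²c| + |a||b|`, turn the hypothesis into
`(C - |b|)(|a| + C|c|) ≤ |λ|(C - |b|)(C + |b|)`. Near `0` we have `|b| < C`, so
`|a/λ| + C|c/λ| ≤ C + |b|`, and letting `λ → 0` gives `|x_j| + C|x_n| ≤ C`. -/

open Complex Metric Filter Topology

theorem norm_add_mul_norm_le_of_norm_lt {a b c : ℂ} {C r : ℝ} (hb : ‖b‖ < C)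
    (h : C * ‖a - starRingEnd ℂ b * c‖ + ‖a * b - (C : ℂ) ^ 2 * c‖ ≤ r * (C ^ 2 - ‖b‖ ^ 2)) :
    ‖a‖ + C * ‖c‖ ≤ r * (C + ‖b‖) := by
  have hC : 0 ≤ C := (norm_nonneg b).trans hb.le
  have ha : ‖a‖ ≤ ‖a - starRingEnd ℂ b * c‖ + ‖b‖ * ‖c‖ := by
    simpa [norm_mul] using norm_le_norm_sub_add a (starRingEnd ℂ b * c)
  have hc : C ^ 2 * ‖c‖ ≤ ‖a * b - (C : ℂ) ^ 2 * c‖ + ‖a‖ * ‖b‖ := by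
    have := norm_le_norm_sub_add ((C : ℂ) ^ 2 * c) (a * b)
    rw [← norm_neg (_ - _), neg_sub, norm_mul, norm_mul, norm_pow, norm_real,
      Real.norm_of_nonneg hC] at this
    linarith
  have hpos : 0 < C - ‖b‖ := sub_pos.mpr hb
  refine le_of_mul_le_mul_left ?_ hpos
  nlinarith [mul_le_mul_of_nonneg_left ha hC]

section Slope

variable {𝕜 E F : Type*} [NontriviallyNormedField 𝕜]
  [NormedAddCommGroup E] [NormedSpace 𝕜 E] [NormedAddCommGroup F] [NormedSpace 𝕜 F]

theorem HasDerivAt.tendsto_norm_div_norm_of_eq_zero {f : 𝕜 → E} {f' : E}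
    (hf : HasDerivAt f f' 0) (hf0 : f 0 = 0) :
    Tendsto (fun z => ‖f z‖ / ‖z‖) (𝓝[≠] 0) (𝓝 ‖f'‖) := by
  simpa [hf0, norm_smul, div_eq_inv_mul] using hf.tendsto_slope_zero.norm

theorem norm_add_mul_norm_deriv_le {f : 𝕜 → E} {g : 𝕜 → F} {f' : E} {g' : F} {β : 𝕜 → ℝ}
    {C : ℝ} (hf : HasDerivAt f f' 0) (hg : HasDerivAt g g' 0) (hf0 : f 0 = 0) (hg0 : g 0 = 0)
    (hβ : Tendsto β (𝓝[≠] 0) (𝓝 0))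
    (h : ∀ᶠ z in 𝓝[≠] 0, ‖f z‖ + C * ‖g z‖ ≤ ‖z‖ * (C + β z)) :
    ‖f'‖ + C * ‖g'‖ ≤ C := by
  have hdiv : ∀ᶠ z in 𝓝[≠] 0, ‖f z‖ / ‖z‖ + C * (‖g z‖ / ‖z‖) ≤ C + β z := by
    filter_upwards [h, self_mem_nhdsWithin] with z hz hz0
    rw [mul_div_assoc', ← add_div, div_le_iff₀ (norm_pos_iff.mpr hz0)]
    linarith
  simpa using le_of_tendsto_of_tendsto
    ((hf.tendsto_norm_div_norm_of_eq_zero hf0).add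
      (tendsto_const_nhds.mul (hg.tendsto_norm_div_norm_of_eq_zero hg0)))
    (tendsto_const_nhds.add hβ) hdiv

end Slope

theorem stmt4_general (n j : ℕ) (hj1 : 1 ≤ j) (hjn : j ≤ n - 1)
    (ψ : ℕ → ℂ → ℂ) (x : ℕ → ℂ)
    (hdiff : ∀ i, 1 ≤ i → i ≤ n → DifferentiableOn ℂ (ψ i) (ball (0 : ℂ) 1))
    (hψ0 : ∀ i, 1 ≤ i → i ≤ n → ψ i 0 = 0)
    (hderiv : ∀ i, 1 ≤ i → i ≤ n → deriv (ψ i) 0 = x i)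
    (hbound : ∀ z ∈ ball (0 : ℂ) 1, z ≠ 0 →
      (n.choose j : ℝ) *
          ‖ψ j z - (starRingEnd ℂ) (ψ (n - j) z) * ψ n z‖ +
        ‖ψ j z * ψ (n - j) z - (n.choose j : ℂ) ^ 2 * ψ n z‖ ≤
      ‖z‖ * ((n.choose j : ℝ) ^ 2 - (‖ψ (n - j) z‖) ^ 2)) :
    ‖x j‖ / (n.choose j : ℝ) + ‖x n‖ ≤ 1 := by
  have hball : ball (0 : ℂ) 1 ∈ 𝓝 0 := ball_mem_nhds 0 one_pos
  have hasDeriv : ∀ i, 1 ≤ i → i ≤ n → HasDerivAt (ψ i) (x i) 0 := fun i hi hin => by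
    simpa [hderiv i hi hin] using ((hdiff i hi hin).differentiableAt hball).hasDerivAt
  have hC : (0 : ℝ) < n.choose j := by exact_mod_cast Nat.choose_pos (by omega)
  have hb : Tendsto (fun z => ‖ψ (n - j) z‖) (𝓝[≠] 0) (𝓝 0) := by
    simpa [hψ0 (n - j) (by omega) (by omega)] using
      ((hasDeriv (n - j) (by omega) (by omega)).continuousAt.tendsto.mono_left
        nhdsWithin_le_nhds).norm
  have hsmall : ∀ᶠ z in 𝓝[≠] 0, ‖ψ j z‖ + n.choose j * ‖ψ n z‖ ≤
      ‖z‖ * (n.choose j + ‖ψ (n - j) z‖) := by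
    filter_upwards [mem_nhdsWithin_of_mem_nhds hball, hb.eventually_lt_const hC,
      self_mem_nhdsWithin] with z hz hlt hz0
    exact norm_add_mul_norm_le_of_norm_lt hlt (by exact_mod_cast hbound z hz hz0)
  have key := norm_add_mul_norm_deriv_le (hasDeriv j hj1 (by omega))
    (hasDeriv n (by omega) le_rfl) (hψ0 j hj1 (by omega)) (hψ0 n (by omega) le_rfl) hb hsmall
  rw [div_add' _ _ _ hC.ne', div_le_one hC]
  linarith

theorem stmt4 (n j : ℕ) (hn : 1 ≤ n) (hj1 : 1 ≤ j) (hjn : j ≤ n - 1)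
    (ψ : ℕ → ℂ → ℂ) (x : ℕ → ℂ)
    (hdiff : ∀ i, 1 ≤ i → i ≤ n → DifferentiableOn ℂ (ψ i) (ball (0 : ℂ) 1))
    (hψ0 : ∀ i, 1 ≤ i → i ≤ n → ψ i 0 = 0)
    (hderiv : ∀ i, 1 ≤ i → i ≤ n → deriv (ψ i) 0 = x i)
    (hbound : ∀ z ∈ ball (0 : ℂ) 1, z ≠ 0 →
      (n.choose j : ℝ) *
          ‖ψ j z - (starRingEnd ℂ) (ψ (n - j) z) * ψ n z‖ +
        ‖ψ j z * ψ (n - j) z - (n.choose j : ℂ) ^ 2 * ψ n z‖ ≤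
      ‖z‖ * ((n.choose j : ℝ) ^ 2 - (‖ψ (n - j) z‖) ^ 2)) :
    ‖x j‖ / (n.choose j : ℝ) + ‖x n‖ ≤ 1 :=
  stmt4_general n j hj1 hjn ψ x hdiff hψ0 hderiv hbound
end

section
/- Let x_1, x_2, x_3 ∈ ℂ with x_1 ≠ 0, |x_2| ≤ |x_1|, and max{|x_1|/3, |x_2|/3} + |x_3| ≤ 1. Then the 2×2 matrix B with entries B_{11} = x_1/√(3|x_1|), B_{12} = ρ, B_{21} = −x_3/√(1 − |x_1|/3), B_{22} = x_2/√(3|x_1|), where ρ = x_1·x_2·conj(x_3)·√(3−|x_1|) / (√3·|x_1|·(3 − |x_1| − 3|x_3|²)), has operator norm at most 1, provided 3 − |x_1| − 3|x_3|² ≠ 0. -/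
/-!
An operator `B` on `ℂ²` has norm at most one iff `1 - B*B` is positive semidefinite, i.e. iff
both columns have norm at most one and the inner product `γ` of the columns satisfies
`|γ|² ≤ (1 - ‖col₁‖²)(1 - ‖col₂‖²)`. With `a = |x₁|`, `b = |x₂|`, `c = |x₃|`,
`D = 3 - a - 3c²` and `E = (3 - a)² - 9c²` one computes
`1 - ‖col₁‖² = E / (3(3 - a))`, `1 - ‖col₂‖² = (b²c²E + D(aE + (a² - b²)(3 - a))) / (3aD²)` and
`|γ|² = b²c²E² / (9a(3 - a)D²)`, so the determinant condition becomes
`0 ≤ E · D · (aE + (a² - b²)(3 - a))`; here `E ≥ 0` because `a + 3c ≤ 3`, `D > 0`, and `b ≤ a`.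
-/

open Complex ComplexConjugate

noncomputable def opNorm2 (B : Matrix (Fin 2) (Fin 2) ℂ) : ℝ :=
  ‖LinearMap.toContinuousLinearMap (Matrix.toEuclideanLin B)‖

lemma opNorm2_le_one_of_normSq_le (p q r s : ℂ)
    (h : ∀ u w : ℂ, normSq (p * u + q * w) + normSq (r * u + s * w) ≤ normSq u + normSq w) :
    opNorm2 !![p, q; r, s] ≤ 1 := by
  refine ContinuousLinearMap.opNorm_le_bound _ zero_le_one fun v => ?_
  rw [one_mul, LinearMap.coe_toContinuousLinearMap', EuclideanSpace.norm_eq,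
    EuclideanSpace.norm_eq]
  refine Real.sqrt_le_sqrt ?_
  simpa [Fin.sum_univ_two, Matrix.mulVec, dotProduct, ← normSq_eq_norm_sq]
    using h (v 0) (v 1)

lemma two_mul_mul_le_of_sq_le_mul {A B g : ℝ} (hA : 0 ≤ A) (hB : 0 ≤ B) (hg : g ^ 2 ≤ A * B)
    (X Y : ℝ) : 2 * g * X * Y ≤ A * X ^ 2 + B * Y ^ 2 := by
  rcases hA.eq_or_lt with rfl | hA
  · obtain rfl : g = 0 := by nlinarith
    nlinarith
  · nlinarith [sq_nonneg (A * X - g * Y), mul_nonneg (sub_nonneg.2 hg) (sq_nonneg Y)]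

lemma normSq_add_normSq_mul_add (p q r s u w : ℂ) :
    normSq (p * u + q * w) + normSq (r * u + s * w) =
      (normSq p + normSq r) * normSq u + (normSq q + normSq s) * normSq w +
        2 * ((p * conj q + r * conj s) * (u * conj w)).re := by
  simp only [normSq_add, map_mul, mul_re, add_re, conj_re, conj_im, add_im, mul_im]
  ring

lemma opNorm2_le_one_of_gram (p q r s : ℂ) (hα : ‖p‖ ^ 2 + ‖r‖ ^ 2 ≤ 1)
    (hβ : ‖q‖ ^ 2 + ‖s‖ ^ 2 ≤ 1)
    (hγ : ‖p * conj q + r * conj s‖ ^ 2 ≤ (1 - (‖p‖ ^ 2 + ‖r‖ ^ 2)) * (1 - (‖q‖ ^ 2 + ‖s‖ ^ 2))) :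
    opNorm2 !![p, q; r, s] ≤ 1 := by
  refine opNorm2_le_one_of_normSq_le p q r s fun u w => ?_
  have hre : ((p * conj q + r * conj s) * (u * conj w)).re ≤
      ‖p * conj q + r * conj s‖ * ‖u‖ * ‖w‖ := by
    simpa [mul_assoc] using re_le_norm ((p * conj q + r * conj s) * (u * conj w))
  have hquad := two_mul_mul_le_of_sq_le_mul (sub_nonneg.2 hα) (sub_nonneg.2 hβ) hγ ‖u‖ ‖w‖
  rw [normSq_add_normSq_mul_add]
  simp only [normSq_eq_norm_sq]
  nlinarith

section Inequalities

variable {a b c : ℝ}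

lemma one_sub_col1_eq (ha3 : a < 3) :
    1 - (a / 3 + 3 * c ^ 2 / (3 - a)) = ((3 - a) ^ 2 - 9 * c ^ 2) / (3 * (3 - a)) := by
  have : 3 - a ≠ 0 := by linarith
  field_simp
  ring

lemma one_sub_col2_eq (ha : a ≠ 0) (hD : 3 - a - 3 * c ^ 2 ≠ 0) :
    1 - (b ^ 2 * c ^ 2 * (3 - a) / (3 * (3 - a - 3 * c ^ 2) ^ 2) + b ^ 2 / (3 * a)) =
      (b ^ 2 * c ^ 2 * ((3 - a) ^ 2 - 9 * c ^ 2) + (3 - a - 3 * c ^ 2) *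
        (a * ((3 - a) ^ 2 - 9 * c ^ 2) + (a ^ 2 - b ^ 2) * (3 - a))) /
        (3 * a * (3 - a - 3 * c ^ 2) ^ 2) := by
  rw [div_add_div _ _ (by positivity) (by positivity), one_sub_div (by positivity),
    div_eq_div_iff (by positivity) (by positivity)]
  ring

lemma gram_sq_le (ha : 0 < a) (ha3 : a < 3) (hD : 0 < 3 - a - 3 * c ^ 2)
    (hE : 0 ≤ (3 - a) ^ 2 - 9 * c ^ 2)
    (hM : 0 ≤ a * ((3 - a) ^ 2 - 9 * c ^ 2) + (a ^ 2 - b ^ 2) * (3 - a)) :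
    b ^ 2 * c ^ 2 * ((3 - a) ^ 2 - 9 * c ^ 2) ^ 2 / (9 * a * (3 - a) * (3 - a - 3 * c ^ 2) ^ 2) ≤
      ((3 - a) ^ 2 - 9 * c ^ 2) / (3 * (3 - a)) *
        ((b ^ 2 * c ^ 2 * ((3 - a) ^ 2 - 9 * c ^ 2) + (3 - a - 3 * c ^ 2) *
          (a * ((3 - a) ^ 2 - 9 * c ^ 2) + (a ^ 2 - b ^ 2) * (3 - a))) /
          (3 * a * (3 - a - 3 * c ^ 2) ^ 2)) := by
  have h3a : 0 < 3 - a := by linarith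
  rw [div_mul_div_comm, show 3 * (3 - a) * (3 * a * (3 - a - 3 * c ^ 2) ^ 2) =
    9 * a * (3 - a) * (3 - a - 3 * c ^ 2) ^ 2 by ring]
  refine div_le_div_of_nonneg_right ?_ (by positivity)
  nlinarith [mul_nonneg (mul_nonneg hE hD.le) hM]

end Inequalities

section Entries

variable {x1 x2 x3 : ℂ}

lemma norm_sq_col1 (ha : 0 < ‖x1‖) (ha3 : ‖x1‖ < 3) :
    ‖x1 / ((√(3 * ‖x1‖) : ℝ) : ℂ)‖ ^ 2 + ‖-x3 / ((√(1 - ‖x1‖ / 3) : ℝ) : ℂ)‖ ^ 2 =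
      ‖x1‖ / 3 + 3 * ‖x3‖ ^ 2 / (3 - ‖x1‖) := by
  simp only [norm_div, norm_neg, norm_real, Real.norm_of_nonneg (Real.sqrt_nonneg _), div_pow]
  rw [Real.sq_sqrt (by positivity), Real.sq_sqrt (by linarith)]
  field_simp

lemma norm_sq_col2 (ha : 0 < ‖x1‖) (ha3 : ‖x1‖ < 3) :
    ‖x1 * x2 * conj x3 * ((√(3 - ‖x1‖) : ℝ) : ℂ) /
        (((√3 : ℝ) : ℂ) * ((‖x1‖ : ℝ) : ℂ) * ((3 - ‖x1‖ - 3 * ‖x3‖ ^ 2 : ℝ) : ℂ))‖ ^ 2 +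
      ‖x2 / ((√(3 * ‖x1‖) : ℝ) : ℂ)‖ ^ 2 =
      ‖x2‖ ^ 2 * ‖x3‖ ^ 2 * (3 - ‖x1‖) / (3 * (3 - ‖x1‖ - 3 * ‖x3‖ ^ 2) ^ 2) +
        ‖x2‖ ^ 2 / (3 * ‖x1‖) := by
  simp only [norm_div, norm_mul, norm_conj, norm_real, Real.norm_of_nonneg (Real.sqrt_nonneg _),
    div_pow, mul_pow, Real.norm_eq_abs, sq_abs]
  rw [Real.sq_sqrt (by positivity), Real.sq_sqrt (by linarith), Real.sq_sqrt (by norm_num)]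
  field_simp

lemma gram_eq (ha : 0 < ‖x1‖) (ha3 : ‖x1‖ < 3) (hD : 0 < 3 - ‖x1‖ - 3 * ‖x3‖ ^ 2) :
    x1 / ((√(3 * ‖x1‖) : ℝ) : ℂ) * conj (x1 * x2 * conj x3 * ((√(3 - ‖x1‖) : ℝ) : ℂ) /
        (((√3 : ℝ) : ℂ) * ((‖x1‖ : ℝ) : ℂ) * ((3 - ‖x1‖ - 3 * ‖x3‖ ^ 2 : ℝ) : ℂ))) +
      -x3 / ((√(1 - ‖x1‖ / 3) : ℝ) : ℂ) * conj (x2 / ((√(3 * ‖x1‖) : ℝ) : ℂ)) =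
      -(conj x2 * x3 * (((3 - ‖x1‖) ^ 2 - 9 * ‖x3‖ ^ 2) /
        (√(3 * ‖x1‖) * √3 * √(3 - ‖x1‖) * (3 - ‖x1‖ - 3 * ‖x3‖ ^ 2)) : ℝ)) := by
  -- Both terms are real multiples of `conj x2 * x3`; their coefficients combine via this identity.
  have hq : √(1 - ‖x1‖ / 3) = √(3 - ‖x1‖) / √3 := by
    rw [← Real.sqrt_div' _ (by norm_num)]
    ring_nf
  have hx1 : x1 * conj x1 = ((‖x1‖ : ℝ) : ℂ) ^ 2 := by
    rw [mul_conj, normSq_eq_norm_sq, ofReal_pow]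
  have ht : ((√(3 - ‖x1‖) : ℝ) : ℂ) ^ 2 = 3 - ‖x1‖ := by
    rw [← ofReal_pow, Real.sq_sqrt (by linarith)]
    push_cast
    ring
  have hr : ((√3 : ℝ) : ℂ) ^ 2 = 3 := by
    rw [← ofReal_pow, Real.sq_sqrt (by norm_num)]
    push_cast
    ring
  have ha0 : ((‖x1‖ : ℝ) : ℂ) ≠ 0 := by exact_mod_cast ha.ne'
  have hD0 : ((3 - ‖x1‖ - 3 * ‖x3‖ ^ 2 : ℝ) : ℂ) ≠ 0 := by exact_mod_cast hD.ne'
  have hs0 : ((√(3 * ‖x1‖) : ℝ) : ℂ) ≠ 0 :=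
    ofReal_ne_zero.2 (Real.sqrt_pos.2 (by positivity)).ne'
  have ht0 : ((√(3 - ‖x1‖) : ℝ) : ℂ) ≠ 0 := ofReal_ne_zero.2 (Real.sqrt_pos.2 (by linarith)).ne'
  have hr0 : ((√3 : ℝ) : ℂ) ≠ 0 := ofReal_ne_zero.2 (Real.sqrt_pos.2 (by norm_num)).ne'
  rw [hq]
  simp only [map_div₀, map_mul, conj_ofReal, conj_conj]
  push_cast at hD0 ⊢
  field_simp
  linear_combination (conj x2 * x3) * (((√(3 - ‖x1‖) : ℝ) : ℂ) ^ 2 * hx1 +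
    ((‖x1‖ : ℝ) : ℂ) ^ 2 * ht +
    (((‖x1‖ : ℝ) : ℂ) ^ 2 - 3 * ((‖x1‖ : ℝ) : ℂ) +
      3 * ((‖x1‖ : ℝ) : ℂ) * ((‖x3‖ : ℝ) : ℂ) ^ 2) * hr)

lemma norm_sq_gram (ha : 0 < ‖x1‖) (ha3 : ‖x1‖ < 3) (hD : 0 < 3 - ‖x1‖ - 3 * ‖x3‖ ^ 2) :
    ‖x1 / ((√(3 * ‖x1‖) : ℝ) : ℂ) * conj (x1 * x2 * conj x3 * ((√(3 - ‖x1‖) : ℝ) : ℂ) /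
        (((√3 : ℝ) : ℂ) * ((‖x1‖ : ℝ) : ℂ) * ((3 - ‖x1‖ - 3 * ‖x3‖ ^ 2 : ℝ) : ℂ))) +
      -x3 / ((√(1 - ‖x1‖ / 3) : ℝ) : ℂ) * conj (x2 / ((√(3 * ‖x1‖) : ℝ) : ℂ))‖ ^ 2 =
      ‖x2‖ ^ 2 * ‖x3‖ ^ 2 * ((3 - ‖x1‖) ^ 2 - 9 * ‖x3‖ ^ 2) ^ 2 /
        (9 * ‖x1‖ * (3 - ‖x1‖) * (3 - ‖x1‖ - 3 * ‖x3‖ ^ 2) ^ 2) := by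
  rw [gram_eq ha ha3 hD]
  simp only [norm_neg, norm_mul, norm_conj, norm_real, Real.norm_eq_abs, mul_pow, sq_abs, div_pow]
  rw [Real.sq_sqrt (by positivity : (0 : ℝ) ≤ 3 * ‖x1‖), Real.sq_sqrt (by linarith : 0 ≤ 3 - ‖x1‖),
    Real.sq_sqrt (by norm_num : (0 : ℝ) ≤ 3)]
  ring

end Entries

theorem stmt6 (x1 x2 x3 : ℂ) (hx1 : x1 ≠ 0)
    (h12 : ‖x2‖ ≤ ‖x1‖)
    (hmax : max (‖x1‖ / 3) (‖x2‖ / 3) + ‖x3‖ ≤ 1)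
    (hden : 3 - ‖x1‖ - 3 * (‖x3‖) ^ 2 ≠ 0) :
    opNorm2
      !![x1 / ((Real.sqrt (3 * ‖x1‖) : ℝ) : ℂ),
          x1 * x2 * (starRingEnd ℂ) x3 * ((Real.sqrt (3 - ‖x1‖) : ℝ) : ℂ) /
            (((Real.sqrt 3 : ℝ) : ℂ) * ((‖x1‖ : ℝ) : ℂ) *
              ((3 - ‖x1‖ - 3 * (‖x3‖) ^ 2 : ℝ) : ℂ));
          -x3 / ((Real.sqrt (1 - ‖x1‖ / 3) : ℝ) : ℂ),
          x2 / ((Real.sqrt (3 * ‖x1‖) : ℝ) : ℂ)] ≤ 1 := by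
  have ha : 0 < ‖x1‖ := norm_pos_iff.2 hx1
  have hac : ‖x1‖ + 3 * ‖x3‖ ≤ 3 := by linarith [le_max_left (‖x1‖ / 3) (‖x2‖ / 3)]
  have hD : 0 < 3 - ‖x1‖ - 3 * ‖x3‖ ^ 2 := by
    refine lt_of_le_of_ne ?_ hden.symm
    nlinarith [norm_nonneg x3]
  have ha3 : ‖x1‖ < 3 := by nlinarith [norm_nonneg x3]
  have hE : 0 ≤ (3 - ‖x1‖) ^ 2 - 9 * ‖x3‖ ^ 2 := by nlinarith [norm_nonneg x3]
  have hM : 0 ≤ ‖x1‖ * ((3 - ‖x1‖) ^ 2 - 9 * ‖x3‖ ^ 2) + (‖x1‖ ^ 2 - ‖x2‖ ^ 2) * (3 - ‖x1‖) := by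
    have : ‖x2‖ ^ 2 ≤ ‖x1‖ ^ 2 := by gcongr
    nlinarith
  have hcol1 := one_sub_col1_eq (c := ‖x3‖) ha3
  have hcol2 := one_sub_col2_eq (b := ‖x2‖) ha.ne' hD.ne'
  apply opNorm2_le_one_of_gram
  · rw [norm_sq_col1 ha ha3, ← sub_nonneg, hcol1]
    exact div_nonneg hE (by linarith)
  · rw [norm_sq_col2 ha ha3, ← sub_nonneg, hcol2]
    exact div_nonneg (add_nonneg (mul_nonneg (by positivity) hE) (mul_nonneg hD.le hM))
      (by positivity)
  · rw [norm_sq_col1 ha ha3, norm_sq_col2 ha ha3, norm_sq_gram ha ha3 hD, hcol1, hcol2]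
    exact gram_sq_le ha ha3 hD hE hM
end

section
/- Let Q : H_2 → K_1, S : H_2 → K_2, R : H_1 → K_2 be bounded operators between Hilbert spaces such that the column operator [Q; S] : H_2 → K_1 ⊕ K_2 and the row operator [R S] : H_1 ⊕ H_2 → K_2 are both contractions. Then there exists a bounded operator P : H_1 → K_1 such that the block operator [[P, Q],[R, S]] : H_1 ⊕ H_2 → K_1 ⊕ K_2 is a contraction. -/
/-!
Write `D_S = (1 - S†S)^{1/2}` and `D_{S†} = (1 - SS†)^{1/2}` for the defect operators of the
contraction `S`. The column condition says `‖Q x‖ ≤ ‖D_S x‖` and the row condition, passed to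
adjoints, says `‖R† y‖ ≤ ‖D_{S†} y‖`; by Douglas' factorization `Q = X D_S` and `R = D_{S†} Y`
with contractions `X`, `Y`. Then `P = -X S† Y` works, because
`[[P, Q], [R, S]] (h₁, h₂) = (X (D_S h₂ - S† Y h₁), D_{S†} Y h₁ + S h₂)` and the rotation
`(x, y) ↦ (D_S x - S† y, D_{S†} y + S x)` is an isometry: the cross terms cancel by the
intertwining relation `S D_S = D_{S†} S`, inherited by the square roots from
`S (1 - S†S) = (1 - SS†) S`.
-/

open scoped InnerProductSpace
open ContinuousLinearMap

theorem exists_norm_le_one_comp_eq_of_norm_le {𝕜 E F G : Type*} [RCLike 𝕜]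
    [AddCommGroup E] [Module 𝕜 E] [NormedAddCommGroup F] [NormedSpace 𝕜 F] [CompleteSpace F]
    [NormedAddCommGroup G] [InnerProductSpace 𝕜 G] [CompleteSpace G]
    (A : E →ₗ[𝕜] F) (B : E →ₗ[𝕜] G) (hAB : ∀ x, ‖A x‖ ≤ ‖B x‖) :
    ∃ X : G →L[𝕜] F, ‖X‖ ≤ 1 ∧ ∀ x, X (B x) = A x := by
  set M := (LinearMap.range B).topologicalClosure
  let e : E →ₗ[𝕜] M :=
    B.codRestrict M fun x ↦ (LinearMap.range B).le_topologicalClosure ⟨x, rfl⟩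
  have he : DenseRange e := by
    rw [DenseRange, Subtype.dense_iff, ← Set.range_comp]
    exact subset_rfl
  have hA : ∀ x, ‖A x‖ ≤ 1 * ‖e x‖ := fun x ↦ by rw [one_mul]; exact hAB x
  refine ⟨(A.extendOfNorm e).comp M.orthogonalProjectionOnto, ?_, fun x ↦ ?_⟩
  · calc _ ≤ ‖A.extendOfNorm e‖ * ‖M.orthogonalProjectionOnto‖ := opNorm_comp_le _ _
      _ ≤ 1 * 1 := by
        gcongr
        exacts [LinearMap.opNorm_extendOfNorm_le he zero_le_one hA,
          M.orthogonalProjectionOnto_norm_le]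
      _ = 1 := one_mul 1
  · have hBx : M.orthogonalProjectionOnto (B x) = e x :=
      M.orthogonalProjectionOnto_mem_subspace_eq_self (e x)
    rw [comp_apply, hBx, LinearMap.extendOfNorm_eq he ⟨1, hA⟩]

theorem norm_adjoint_apply_sq_add_le {𝕜 H₁ H₂ K : Type*} [RCLike 𝕜]
    [NormedAddCommGroup H₁] [InnerProductSpace 𝕜 H₁] [CompleteSpace H₁]
    [NormedAddCommGroup H₂] [InnerProductSpace 𝕜 H₂] [CompleteSpace H₂]
    [NormedAddCommGroup K] [InnerProductSpace 𝕜 K] [CompleteSpace K]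
    (A : H₁ →L[𝕜] K) (B : H₂ →L[𝕜] K)
    (h : ∀ x y, ‖A x + B y‖ ^ 2 ≤ ‖x‖ ^ 2 + ‖y‖ ^ 2) (z : K) :
    ‖adjoint A z‖ ^ 2 + ‖adjoint B z‖ ^ 2 ≤ ‖z‖ ^ 2 := by
  set u := A (adjoint A z) + B (adjoint B z)
  have hre : RCLike.re ⟪u, z⟫_𝕜 = ‖adjoint A z‖ ^ 2 + ‖adjoint B z‖ ^ 2 := by
    rw [inner_add_left, map_add, ← adjoint_inner_right A, ← adjoint_inner_right B,
      inner_self_eq_norm_sq, inner_self_eq_norm_sq]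
  have hu : ‖u‖ ^ 2 ≤ ‖adjoint A z‖ ^ 2 + ‖adjoint B z‖ ^ 2 := h _ _
  have hcs : ‖adjoint A z‖ ^ 2 + ‖adjoint B z‖ ^ 2 ≤ ‖u‖ * ‖z‖ :=
    hre ▸ re_inner_le_norm u z
  nlinarith [norm_nonneg u, norm_nonneg z]

theorem opNorm_le_one_of_sq_add_le {𝕜 E F G : Type*} [RCLike 𝕜]
    [SeminormedAddCommGroup E] [NormedSpace 𝕜 E] [SeminormedAddCommGroup F]
    [NormedSpace 𝕜 F] [SeminormedAddCommGroup G] [NormedSpace 𝕜 G]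
    (A : E →L[𝕜] F) (B : E →L[𝕜] G) (h : ∀ x, ‖A x‖ ^ 2 + ‖B x‖ ^ 2 ≤ ‖x‖ ^ 2) :
    ‖B‖ ≤ 1 :=
  B.opNorm_le_bound zero_le_one fun x ↦ by
    rw [one_mul, ← pow_le_pow_iff_left₀ (norm_nonneg _) (norm_nonneg _) two_ne_zero]
    nlinarith [h x, sq_nonneg ‖A x‖]

namespace ContinuousLinearMap

variable {H K : Type*} [NormedAddCommGroup H] [InnerProductSpace ℂ H] [CompleteSpace H]
  [NormedAddCommGroup K] [InnerProductSpace ℂ K] [CompleteSpace K]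

theorem comp_cfc_eq_cfc_comp (T : H →L[ℂ] K) {a : H →L[ℂ] H} {b : K →L[ℂ] K}
    (ha : IsSelfAdjoint a) (hb : IsSelfAdjoint b) (hT : T ∘L a = b ∘L T) (f : ℝ → ℝ)
    (hf : ContinuousOn f (spectrum ℝ a ∪ spectrum ℝ b)) :
    T ∘L cfc f a = cfc f b ∘L T := by
  set s := spectrum ℝ a ∪ spectrum ℝ b
  have : CompactSpace s := isCompact_iff_compactSpace.mp
    ((spectrum.isCompact a).union (spectrum.isCompact b))
  have hsa : spectrum ℝ a ⊆ s := Set.subset_union_left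
  have hsb : spectrum ℝ b ⊆ s := Set.subset_union_right
  -- Working on a common compact superset of both spectra lets one Stone–Weierstrass
  -- induction handle the two functional calculi simultaneously.
  suffices key : ∀ g : C(s, ℝ),
      T ∘L cfcHomSuperset ha hsa g = cfcHomSuperset hb hsb g ∘L T by
    convert key ⟨_, hf.domRestrict⟩ using 2
    · exact cfc_apply f a ha (hf.mono hsa)
    · exact cfc_apply f b hb (hf.mono hsb)
  intro g
  induction g using ContinuousMap.induction_on_of_compact with
  | const r =>
    rw [show ContinuousMap.const s r = algebraMap ℝ C(s, ℝ) r from rfl, AlgHomClass.commutes,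
      AlgHomClass.commutes, Algebra.algebraMap_eq_smul_one, Algebra.algebraMap_eq_smul_one]
    simp only [comp_smul, smul_comp, one_def, comp_id, id_comp]
  | id => simpa only [cfcHomSuperset_id] using hT
  | star_id => simpa only [star_trivial, cfcHomSuperset_id] using hT
  | add f g hf hg => simp only [map_add, comp_add, add_comp, hf, hg]
  | mul f g hf hg =>
    rw [map_mul, map_mul, mul_def, mul_def, ← comp_assoc, hf, comp_assoc, hg, comp_assoc]
  | frequently f hf =>
    have hclosed : IsClosed
        {g : C(s, ℝ) | T ∘L cfcHomSuperset ha hsa g = cfcHomSuperset hb hsb g ∘L T} :=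
      isClosed_eq (continuous_const.clm_comp (cfcHomSuperset_continuous ha hsa))
        ((cfcHomSuperset_continuous hb hsb).clm_comp continuous_const)
    exact hclosed.mem_of_frequently_of_tendsto hf Filter.tendsto_id

theorem re_inner_one_sub_adjoint_comp_self_apply (S : H →L[ℂ] K) (x : H) :
    RCLike.re ⟪(1 - adjoint S ∘L S) x, x⟫_ℂ = ‖x‖ ^ 2 - ‖S x‖ ^ 2 := by
  rw [sub_apply, inner_sub_left, map_sub, one_apply_eq_self,
    apply_norm_sq_eq_inner_adjoint_left, inner_self_eq_norm_sq]

theorem one_sub_adjoint_comp_self_nonneg {S : H →L[ℂ] K} (hS : ‖S‖ ≤ 1) :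
    0 ≤ 1 - adjoint S ∘L S := by
  rw [nonneg_iff_isPositive, isPositive_def]
  refine ⟨((IsSelfAdjoint.one _).sub (isPositive_adjoint_comp_self S).isSelfAdjoint).isSymmetric,
    fun x ↦ ?_⟩
  rw [reApplyInnerSelf_apply, re_inner_one_sub_adjoint_comp_self_apply, sub_nonneg]
  gcongr
  simpa only [one_mul] using S.le_of_opNorm_le hS x

noncomputable def defect (S : H →L[ℂ] K) : H →L[ℂ] H := CFC.sqrt (1 - adjoint S ∘L S)

theorem isSelfAdjoint_defect (S : H →L[ℂ] K) : IsSelfAdjoint S.defect :=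
  .of_nonneg (CFC.sqrt_nonneg _)

theorem defect_mul_defect {S : H →L[ℂ] K} (hS : ‖S‖ ≤ 1) :
    S.defect * S.defect = 1 - adjoint S ∘L S :=
  CFC.sqrt_mul_sqrt_self _ (one_sub_adjoint_comp_self_nonneg hS)

theorem norm_defect_apply_sq {S : H →L[ℂ] K} (hS : ‖S‖ ≤ 1) (x : H) :
    ‖S.defect x‖ ^ 2 = ‖x‖ ^ 2 - ‖S x‖ ^ 2 := by
  rw [apply_norm_sq_eq_inner_adjoint_left, (isSelfAdjoint_defect S).adjoint_eq, ← mul_def,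
    defect_mul_defect hS, re_inner_one_sub_adjoint_comp_self_apply]

theorem comp_defect {S : H →L[ℂ] K} (hS : ‖S‖ ≤ 1) :
    S ∘L S.defect = (adjoint S).defect ∘L S := by
  have hS' : ‖adjoint S‖ ≤ 1 := by rwa [adjoint.norm_map]
  have h := one_sub_adjoint_comp_self_nonneg hS
  have h' := one_sub_adjoint_comp_self_nonneg hS'
  rw [defect, defect, CFC.sqrt_eq_real_sqrt _ h, CFC.sqrt_eq_real_sqrt _ h', cfcₙ_eq_cfc,
    cfcₙ_eq_cfc, adjoint_adjoint]
  rw [adjoint_adjoint] at h'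
  refine S.comp_cfc_eq_cfc_comp h.isSelfAdjoint h'.isSelfAdjoint ?_ _
    Real.continuous_sqrt.continuousOn
  simp only [sub_comp, comp_sub, one_def, id_comp, comp_id, comp_assoc]

theorem norm_defect_sub_sq_add_norm_defect_add_sq {S : H →L[ℂ] K} (hS : ‖S‖ ≤ 1)
    (x : H) (y : K) :
    ‖S.defect x - adjoint S y‖ ^ 2 + ‖(adjoint S).defect y + S x‖ ^ 2 = ‖x‖ ^ 2 + ‖y‖ ^ 2 := by
  have hS' : ‖adjoint S‖ ≤ 1 := by rwa [adjoint.norm_map]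
  have hcross :
      RCLike.re ⟪(adjoint S).defect y, S x⟫_ℂ = RCLike.re ⟪S.defect x, adjoint S y⟫_ℂ := by
    have h := congr($(comp_defect hS') y)
    rw [adjoint_adjoint, comp_apply, comp_apply] at h
    rw [← adjoint_inner_left, h, ← adjoint_inner_right S.defect,
      (isSelfAdjoint_defect S).adjoint_eq, inner_re_symm]
  have hx := norm_defect_apply_sq hS x
  have hy := norm_defect_apply_sq hS' y
  rw [norm_sub_sq (𝕜 := ℂ), norm_add_sq (𝕜 := ℂ), hcross]
  linarith

theorem exists_norm_le_one_comp_defect_eq {E : Type*} [NormedAddCommGroup E]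
    [NormedSpace ℂ E] [CompleteSpace E] (A : H →L[ℂ] E) (S : H →L[ℂ] K)
    (h : ∀ x, ‖A x‖ ^ 2 + ‖S x‖ ^ 2 ≤ ‖x‖ ^ 2) :
    ∃ X : H →L[ℂ] E, ‖X‖ ≤ 1 ∧ ∀ x, X (S.defect x) = A x := by
  refine exists_norm_le_one_comp_eq_of_norm_le (A : H →ₗ[ℂ] E) (S.defect : H →ₗ[ℂ] H)
    fun x ↦ ?_
  rw [← pow_le_pow_iff_left₀ (norm_nonneg _) (norm_nonneg _) two_ne_zero]
  have := norm_defect_apply_sq (opNorm_le_one_of_sq_add_le A S h) x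
  change ‖A x‖ ^ 2 ≤ ‖S.defect x‖ ^ 2
  linarith [h x]

end ContinuousLinearMap

theorem stmt8 {H1 H2 K1 K2 : Type*}
    [NormedAddCommGroup H1] [InnerProductSpace ℂ H1] [CompleteSpace H1]
    [NormedAddCommGroup H2] [InnerProductSpace ℂ H2] [CompleteSpace H2]
    [NormedAddCommGroup K1] [InnerProductSpace ℂ K1] [CompleteSpace K1]
    [NormedAddCommGroup K2] [InnerProductSpace ℂ K2] [CompleteSpace K2]
    (Q : H2 →L[ℂ] K1) (S : H2 →L[ℂ] K2) (R : H1 →L[ℂ] K2)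
    (hcol : ∀ h2 : H2, ‖Q h2‖ ^ 2 + ‖S h2‖ ^ 2 ≤ ‖h2‖ ^ 2)
    (hrow : ∀ (h1 : H1) (h2 : H2), ‖R h1 + S h2‖ ^ 2 ≤ ‖h1‖ ^ 2 + ‖h2‖ ^ 2) :
    ∃ P : H1 →L[ℂ] K1, ∀ (h1 : H1) (h2 : H2),
      ‖P h1 + Q h2‖ ^ 2 + ‖R h1 + S h2‖ ^ 2 ≤ ‖h1‖ ^ 2 + ‖h2‖ ^ 2 := by
  have hS : ‖S‖ ≤ 1 := opNorm_le_one_of_sq_add_le Q S hcol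
  obtain ⟨X, hX, hXQ⟩ := exists_norm_le_one_comp_defect_eq Q S hcol
  obtain ⟨Z, hZ, hZR⟩ := exists_norm_le_one_comp_defect_eq (adjoint R) (adjoint S)
    (norm_adjoint_apply_sq_add_le R S hrow)
  set Y := adjoint Z
  have hY : ‖Y‖ ≤ 1 := (adjoint.norm_map Z).trans_le hZ
  have hR : (adjoint S).defect ∘L Y = R := by
    rw [← (isSelfAdjoint_defect _).adjoint_eq, ← adjoint_comp,
      show Z ∘L (adjoint S).defect = adjoint R from ext hZR, adjoint_adjoint]
  refine ⟨-(X ∘L adjoint S ∘L Y), fun h1 h2 ↦ ?_⟩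
  calc _ = ‖X (S.defect h2 - adjoint S (Y h1))‖ ^ 2 + ‖(adjoint S).defect (Y h1) + S h2‖ ^ 2 := by
        rw [map_sub, hXQ, ← hR]
        simp only [neg_apply, comp_apply]
        abel_nf
    _ ≤ ‖S.defect h2 - adjoint S (Y h1)‖ ^ 2 + ‖(adjoint S).defect (Y h1) + S h2‖ ^ 2 := by
        gcongr
        simpa only [one_mul] using X.le_of_opNorm_le hX _
    _ = ‖h2‖ ^ 2 + ‖Y h1‖ ^ 2 := norm_defect_sub_sq_add_norm_defect_add_sq hS _ _
    _ ≤ ‖h1‖ ^ 2 + ‖h2‖ ^ 2 := by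
        rw [add_comm]
        gcongr
        simpa only [one_mul] using Y.le_of_opNorm_le hY h1
end

section
/- Let x_1, x_2, x_3 ∈ ℂ with x_1 ≠ 0, |x_2| ≤ |x_1|, max{|x_1|/3, |x_2|/3} + |x_3| ≤ 1, and 3 − |x_1| − 3|x_3|² ≠ 0. Define l = x_1·x_2·(3 − |x_1|)/(3|x_1|·(3 − |x_1| − 3|x_3|²)) and ψ(λ) = (λ·x_1/(1 + λ·conj(x_3)·l), λ·x_2/(1 + λ·conj(x_3)·l), λ·(x_3 + λ·l)/(1 + λ·conj(x_3)·l)) for λ ∈ 𝔻. Then ψ is analytic on 𝔻 (in particular 1 + λ·conj(x_3)·l ≠ 0 for all λ ∈ 𝔻), ψ(0) = (0,0,0), and ψ'(0) = (x_1, x_2, x_3). -/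
/-!
The substance is that the denominator `1 + λ conj(x₃) l` has no zero in the disk, i.e. that
`‖x₃‖ ‖l‖ ≤ 1`; after cancelling `‖x₁‖` this is a polynomial inequality in `‖x₁‖, ‖x₂‖, ‖x₃‖`.
Each map `λ ↦ λ p(λ) / (1 + λ c)` with `p` entire and `‖c‖ ≤ 1` is then holomorphic on the disk,
vanishes at `0`, and has derivative `p 0` there since the denominator equals `1` at `0`.
-/

open Complex Metric

lemma mul_mul_three_sub_le {a b t : ℝ} (hba : b ≤ a) (ht : 0 ≤ t)
    (hat : a + 3 * t ≤ 3) : t * b * (3 - a) ≤ 3 * (3 - a - 3 * t ^ 2) := by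
  -- `b ≤ a ≤ 3 - 3t` reduces it to `(3 - a)(1 - t + t²) ≥ 3t²`, and `3 - a ≥ 3t` leaves `3t(1 - t)² ≥ 0`.
  have hb : t * b * (3 - a) ≤ t * (3 - 3 * t) * (3 - a) := by
    gcongr
    · linarith
    · linarith
  have hs : 3 * t * (1 - t + t ^ 2) ≤ (3 - a) * (1 - t + t ^ 2) := by
    gcongr
    · nlinarith [sq_nonneg (t - 1 / 2)]
    · linarith
  nlinarith [mul_nonneg ht (sq_nonneg (1 - t))]

lemma norm_mul_norm_interpolationCoeff_le_one {x1 x2 x3 : ℂ} (hx1 : x1 ≠ 0) (h12 : ‖x2‖ ≤ ‖x1‖)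
    (h13 : ‖x1‖ + 3 * ‖x3‖ ≤ 3) (hden : 0 < 3 - ‖x1‖ - 3 * ‖x3‖ ^ 2) :
    ‖x3‖ * ‖x1 * x2 * ((3 - ‖x1‖ : ℝ) : ℂ) /
      ((3 * ‖x1‖ * (3 - ‖x1‖ - 3 * ‖x3‖ ^ 2) : ℝ) : ℂ)‖ ≤ 1 := by
  have ha : 0 < ‖x1‖ := norm_pos_iff.mpr hx1
  have hnorm : ‖x1 * x2 * ((3 - ‖x1‖ : ℝ) : ℂ) /
      ((3 * ‖x1‖ * (3 - ‖x1‖ - 3 * ‖x3‖ ^ 2) : ℝ) : ℂ)‖ =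
      ‖x2‖ * (3 - ‖x1‖) / (3 * (3 - ‖x1‖ - 3 * ‖x3‖ ^ 2)) := by
    rw [norm_div, norm_mul, norm_mul, norm_real, norm_real,
      Real.norm_of_nonneg (by linarith [sq_nonneg ‖x3‖]), Real.norm_of_nonneg (by positivity)]
    field_simp
  rw [hnorm, ← mul_div_assoc, div_le_one (by positivity), ← mul_assoc]
  exact mul_mul_three_sub_le h12 (norm_nonneg _) h13

section QuotientByOneAddMul

variable {c : ℂ} {p ψ : ℂ → ℂ}

lemma one_add_mul_ne_zero_of_mem_ball (hc : ‖c‖ ≤ 1) {z : ℂ} (hz : z ∈ ball (0 : ℂ) 1) :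
    1 + z * c ≠ 0 := by
  intro h
  have hlt : ‖z * c‖ < 1 := by
    rw [norm_mul]
    exact lt_of_le_of_lt (mul_le_of_le_one_right (norm_nonneg z) hc) (mem_ball_zero_iff.mp hz)
  rw [eq_neg_of_add_eq_zero_right h, norm_neg, norm_one] at hlt
  exact lt_irrefl 1 hlt

lemma differentiableOn_ball_of_eq_mul_div (hc : ‖c‖ ≤ 1) (hp : Differentiable ℂ p)
    (hψ : ∀ z, ψ z = z * p z / (1 + z * c)) : DifferentiableOn ℂ ψ (ball 0 1) := by
  rw [funext hψ]
  exact (differentiable_id.mul hp).differentiableOn.div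
    ((differentiable_id.mul_const c).const_add 1).differentiableOn
    fun z hz => one_add_mul_ne_zero_of_mem_ball hc hz

lemma hasDerivAt_zero_of_eq_mul_div (hp : DifferentiableAt ℂ p 0)
    (hψ : ∀ z, ψ z = z * p z / (1 + z * c)) : HasDerivAt ψ (p 0) 0 := by
  have hnum : HasDerivAt (fun z => z * p z) (1 * p 0 + 0 * deriv p 0) 0 :=
    (hasDerivAt_id 0).mul hp.hasDerivAt
  have hden : HasDerivAt (fun z => 1 + z * c) (1 * c) 0 :=
    ((hasDerivAt_id 0).mul_const c).const_add 1
  rw [funext hψ]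
  simpa using hnum.fun_div hden (by simp)

end QuotientByOneAddMul

theorem stmt9 (x1 x2 x3 : ℂ) (hx1 : x1 ≠ 0)
    (h12 : ‖x2‖ ≤ ‖x1‖)
    (hmax : max (‖x1‖ / 3) (‖x2‖ / 3) + ‖x3‖ ≤ 1)
    (hden : 3 - ‖x1‖ - 3 * (‖x3‖) ^ 2 ≠ 0)
    (l : ℂ)
    (hl : l = x1 * x2 * ((3 - ‖x1‖ : ℝ) : ℂ) /
      ((3 * ‖x1‖ * (3 - ‖x1‖ - 3 * (‖x3‖) ^ 2) : ℝ) : ℂ))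
    (ψ1 ψ2 ψ3 : ℂ → ℂ)
    (hψ1 : ∀ z : ℂ, ψ1 z = z * x1 / (1 + z * (starRingEnd ℂ) x3 * l))
    (hψ2 : ∀ z : ℂ, ψ2 z = z * x2 / (1 + z * (starRingEnd ℂ) x3 * l))
    (hψ3 : ∀ z : ℂ, ψ3 z = z * (x3 + z * l) / (1 + z * (starRingEnd ℂ) x3 * l)) :
    (∀ z ∈ ball (0 : ℂ) 1, 1 + z * (starRingEnd ℂ) x3 * l ≠ 0) ∧
    DifferentiableOn ℂ ψ1 (ball (0 : ℂ) 1) ∧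
    DifferentiableOn ℂ ψ2 (ball (0 : ℂ) 1) ∧
    DifferentiableOn ℂ ψ3 (ball (0 : ℂ) 1) ∧
    ψ1 0 = 0 ∧ ψ2 0 = 0 ∧ ψ3 0 = 0 ∧
    deriv ψ1 0 = x1 ∧ deriv ψ2 0 = x2 ∧ deriv ψ3 0 = x3 := by
  have h13 : ‖x1‖ + 3 * ‖x3‖ ≤ 3 := by linarith [le_max_left (‖x1‖ / 3) (‖x2‖ / 3)]
  have hden_pos : 0 < 3 - ‖x1‖ - 3 * ‖x3‖ ^ 2 := by
    refine lt_of_le_of_ne ?_ hden.symm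
    have ht1 : ‖x3‖ ≤ 1 := by linarith [norm_nonneg x1]
    nlinarith [mul_nonneg (norm_nonneg x3) (sub_nonneg.mpr ht1)]
  have hc : ‖starRingEnd ℂ x3 * l‖ ≤ 1 := by
    rw [norm_mul, norm_conj, hl]
    exact norm_mul_norm_interpolationCoeff_le_one hx1 h12 h13 hden_pos
  have hψ1' : ∀ z, ψ1 z = z * x1 / (1 + z * (starRingEnd ℂ x3 * l)) := by
    simpa only [mul_assoc] using hψ1
  have hψ2' : ∀ z, ψ2 z = z * x2 / (1 + z * (starRingEnd ℂ x3 * l)) := by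
    simpa only [mul_assoc] using hψ2
  have hψ3' : ∀ z, ψ3 z = z * (x3 + z * l) / (1 + z * (starRingEnd ℂ x3 * l)) := by
    simpa only [mul_assoc] using hψ3
  have hp3 : Differentiable ℂ fun z => x3 + z * l := (differentiable_id.mul_const l).const_add x3
  refine ⟨fun z hz => by simpa only [mul_assoc] using one_add_mul_ne_zero_of_mem_ball hc hz,
    differentiableOn_ball_of_eq_mul_div hc (differentiable_const x1) hψ1',
    differentiableOn_ball_of_eq_mul_div hc (differentiable_const x2) hψ2',
    differentiableOn_ball_of_eq_mul_div hc hp3 hψ3',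
    by simp [hψ1], by simp [hψ2], by simp [hψ3], ?_, ?_, ?_⟩
  · exact (hasDerivAt_zero_of_eq_mul_div (differentiableAt_const x1) hψ1').deriv
  · exact (hasDerivAt_zero_of_eq_mul_div (differentiableAt_const x2) hψ2').deriv
  · simpa using (hasDerivAt_zero_of_eq_mul_div (hp3 0) hψ3').deriv
end

section
/- For n even and y = (y_1,…,y_{n-1},q) ∈ ℂ^n: y lies in G̃_n if and only if the point ŷ ∈ ℂ^{n+1} lies in G̃_{n+1}, where ŷ has last coordinate q, ŷ_j = ((n+1)/(n+1−j))·y_j and ŷ_{n+1−j} = ((n+1)/(n+1−j))·y_{n−j} for 1 ≤ j ≤ n/2. -/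
/-!
A point lies in `G̃_m` exactly when each pair of coordinates `(y_j, y_{m-j})` with `j ≤ m / 2`
is represented as `(a + conj b * q, b + conj a * q)` with `‖a‖ + ‖b‖ < C(m, j)`; for the middle
index of an even `m` the average `(a + b) / 2` recovers a single `β_{m/2}`. For even `n` the pairs
of `G̃_n` and `G̃_{n+1}` are then matched index by index, and the scaling `ŷ = c_j y` with
`c_j = (n+1)/(n+1-j)` carries one representation to the other because
`C(n+1, j) = c_j C(n, j)`.
-/

open Complex ComplexConjugate

/-- Membership in the extended symmetrized polydisc `G̃_m`, with coordinates
`y 1, …, y (m-1)` and last coordinate `q`. -/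
def inGtilde (m : ℕ) (y : ℕ → ℂ) (q : ℂ) : Prop :=
  ‖q‖ < 1 ∧ ∃ β : ℕ → ℂ, ∀ j, 1 ≤ j → j ≤ m - 1 →
    y j = β j + (starRingEnd ℂ) (β (m - j)) * q ∧
    ‖β j‖ + ‖β (m - j)‖ < (m.choose j : ℝ)

def PairRep (C : ℝ) (q y₁ y₂ : ℂ) : Prop :=
  ∃ a b : ℂ, y₁ = a + conj b * q ∧ y₂ = b + conj a * q ∧ ‖a‖ + ‖b‖ < C

theorem pairRep_ofReal_mul_iff {c : ℝ} (hc : 0 < c) {C : ℝ} {q y₁ y₂ : ℂ} :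
    PairRep (c * C) q (c * y₁) (c * y₂) ↔ PairRep C q y₁ y₂ := by
  have hc' : (c : ℂ) ≠ 0 := ofReal_ne_zero.mpr hc.ne'
  constructor
  · rintro ⟨a, b, ha, hb, hab⟩
    refine ⟨a / c, b / c, ?_, ?_, ?_⟩
    · rw [map_div₀, conj_ofReal]; field_simp; linear_combination ha
    · rw [map_div₀, conj_ofReal]; field_simp; linear_combination hb
    · rw [norm_div, norm_div, norm_real, Real.norm_of_nonneg hc.le, ← add_div,
        div_lt_iff₀ hc, mul_comm]
      exact hab
  · rintro ⟨a, b, ha, hb, hab⟩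
    refine ⟨c * a, c * b, ?_, ?_, ?_⟩
    · rw [map_mul, conj_ofReal, ha]; ring
    · rw [map_mul, conj_ofReal, hb]; ring
    · rw [norm_mul, norm_mul, norm_real, Real.norm_of_nonneg hc.le, ← mul_add]
      exact mul_lt_mul_of_pos_left hab hc

theorem choose_succ_eq_div_mul_choose {n j : ℕ} (hj : j ≤ n) :
    ((n + 1).choose j : ℝ) = ((n + 1 : ℕ) : ℝ) / ((n + 1 - j : ℕ) : ℝ) * n.choose j := by
  have hpos : (0 : ℝ) < ((n + 1 - j : ℕ) : ℝ) := by exact_mod_cast (by omega : 0 < n + 1 - j)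
  rw [div_mul_eq_mul_div, eq_div_iff hpos.ne', mul_comm ((n + 1 : ℕ) : ℝ)]
  exact_mod_cast (Nat.choose_mul_succ_eq n j).symm

theorem inGtilde_iff_forall_pairRep (m : ℕ) (y : ℕ → ℂ) (q : ℂ) :
    inGtilde m y q ↔
      ‖q‖ < 1 ∧ ∀ j, 1 ≤ j → j ≤ m / 2 → PairRep (m.choose j) q (y j) (y (m - j)) := by
  refine and_congr_right fun _ => ⟨?_, ?_⟩
  · rintro ⟨β, hβ⟩ j hj1 hj2
    obtain ⟨hyj, hbound⟩ := hβ j hj1 (by omega)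
    obtain ⟨hyj', -⟩ := hβ (m - j) (by omega) (by omega)
    rw [Nat.sub_sub_self (by omega)] at hyj'
    exact ⟨β j, β (m - j), hyj, hyj', hbound⟩
  · intro H
    choose! a b hya hyb hab using H
    refine ⟨fun j => if 2 * j < m then a j else if m < 2 * j then b (m - j) else (a j + b j) / 2,
      fun j hj1 hj2 => ?_⟩
    rcases lt_trichotomy (2 * j) m with hlt | heq | hgt
    · have hmj : m - (m - j) = j := by omega
      simp only [if_pos hlt, if_neg (show ¬ 2 * (m - j) < m by omega),
        if_pos (show m < 2 * (m - j) by omega), hmj]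
      exact ⟨hya j hj1 (by omega), hab j hj1 (by omega)⟩
    · have hmj : m - j = j := by omega
      simp only [if_neg (lt_irrefl m), heq, hmj]
      have hya' := hya j hj1 (by omega)
      have hyb' := hyb j hj1 (by omega)
      rw [hmj] at hyb'
      constructor
      · rw [map_div₀, map_add, map_ofNat]; linear_combination (hya' + hyb') / 2
      · calc ‖(a j + b j) / 2‖ + ‖(a j + b j) / 2‖ = ‖a j + b j‖ := by
              rw [norm_div, Complex.norm_two]; ring
          _ ≤ ‖a j‖ + ‖b j‖ := norm_add_le _ _
          _ < _ := hab j hj1 (by omega)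
    · obtain ⟨k, rfl⟩ : ∃ k, j = m - k := ⟨m - j, by omega⟩
      have hmk : m - (m - k) = k := by omega
      simp only [if_neg (show ¬ 2 * (m - k) < m by omega), if_pos hgt, hmk,
        if_pos (show 2 * k < m by omega)]
      rw [Nat.choose_symm (by omega), add_comm ‖b k‖]
      exact ⟨hyb k (by omega) (by omega), hab k (by omega) (by omega)⟩

theorem stmt11_general (n : ℕ) (hne : Even n) (y yhat : ℕ → ℂ) (q : ℂ)
    (h1 : ∀ j, 1 ≤ j → j ≤ n / 2 →
      yhat j = (((n + 1 : ℕ) : ℂ) / ((n + 1 - j : ℕ) : ℂ)) * y j)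
    (h2 : ∀ j, 1 ≤ j → j ≤ n / 2 →
      yhat (n + 1 - j) = (((n + 1 : ℕ) : ℂ) / ((n + 1 - j : ℕ) : ℂ)) * y (n - j)) :
    inGtilde n y q ↔ inGtilde (n + 1) yhat q := by
  have hhalf : (n + 1) / 2 = n / 2 := by obtain ⟨k, rfl⟩ := hne; omega
  rw [inGtilde_iff_forall_pairRep, inGtilde_iff_forall_pairRep, hhalf]
  refine and_congr_right' (forall₃_congr fun j hj1 hj2 => ?_)
  have hc : (0 : ℝ) < ((n + 1 : ℕ) : ℝ) / ((n + 1 - j : ℕ) : ℝ) := by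
    apply div_pos <;> exact_mod_cast (by omega : 0 < _)
  rw [h1 j hj1 hj2, h2 j hj1 hj2, choose_succ_eq_div_mul_choose (by omega),
    ← pairRep_ofReal_mul_iff hc]
  simp only [ofReal_div, ofReal_natCast]

theorem stmt11 (n : ℕ) (hn : 2 ≤ n) (hne : Even n) (y yhat : ℕ → ℂ) (q : ℂ)
    (h1 : ∀ j, 1 ≤ j → j ≤ n / 2 →
      yhat j = (((n + 1 : ℕ) : ℂ) / ((n + 1 - j : ℕ) : ℂ)) * y j)
    (h2 : ∀ j, 1 ≤ j → j ≤ n / 2 →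
      yhat (n + 1 - j) = (((n + 1 : ℕ) : ℂ) / ((n + 1 - j : ℕ) : ℂ)) * y (n - j)) :
    inGtilde n y q ↔ inGtilde (n + 1) yhat q :=
  stmt11_general n hne y yhat q h1 h2
end

section
/- For n odd and y = (y_1,…,y_{n-1},q) ∈ G̃_n, the point y* ∈ ℂ^{n+1} lies in G̃_{n+1}, where y* has last coordinate q, middle coordinate (position (n+1)/2) equal to y_{(n−1)/2} + y_{(n+1)/2}, and y*_j = ((n+1)/(n+1−j))·y_j, y*_{n+1−j} = ((n+1)/(n+1−j))·y_{n−j} for 1 ≤ j ≤ (n−1)/2. -/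
open Complex

/- With n = 2k+1, the witness β for y is transported to a witness β* for y*: the pair of
indices (j, n-j) of G̃_n, 1 ≤ j ≤ k, becomes the pair (j, n+1-j) of G̃_{n+1} after scaling by
the factor (n+1)/(n+1-j), which is real and so commutes with conjugation, and which turns the
bound C(n,j) into C(n+1,j); the two middle indices k, k+1 merge into the single self-paired
index k+1 with β*_{k+1} = β_k + β_{k+1}, and Pascal's rule C(n,k) + C(n,k+1) = C(n+1,k+1)
gives the bound. -/

def GtildeCoord (q y b b' : ℂ) (C : ℝ) : Prop :=
  y = b + starRingEnd ℂ b' * q ∧ ‖b‖ + ‖b'‖ < C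

namespace GtildeCoord

variable {q y y₁ y₂ b b' b₁ b₂ : ℂ} {C C₁ C₂ : ℝ}

lemma ofReal_mul {c : ℝ} (hc : 0 < c) (h : GtildeCoord q y b b' C) :
    GtildeCoord q (c * y) (c * b) (c * b') (c * C) := by
  obtain ⟨hy, hb⟩ := h
  refine ⟨by rw [hy, map_mul, conj_ofReal]; ring, ?_⟩
  simp only [norm_mul, norm_real, Real.norm_eq_abs, abs_of_pos hc]
  nlinarith

lemma add_swap (h₁ : GtildeCoord q y₁ b₁ b₂ C₁) (h₂ : GtildeCoord q y₂ b₂ b₁ C₂) :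
    GtildeCoord q (y₁ + y₂) (b₁ + b₂) (b₁ + b₂) (C₁ + C₂) := by
  obtain ⟨hy₁, hb₁⟩ := h₁
  obtain ⟨hy₂, hb₂⟩ := h₂
  refine ⟨by rw [hy₁, hy₂, map_add]; ring, ?_⟩
  linarith [norm_add_le b₁ b₂]

end GtildeCoord

lemma inGtilde_iff {m : ℕ} {y : ℕ → ℂ} {q : ℂ} :
    inGtilde m y q ↔ ‖q‖ < 1 ∧ ∃ β : ℕ → ℂ, ∀ j, 1 ≤ j → j ≤ m - 1 →
      GtildeCoord q (y j) (β j) (β (m - j)) (m.choose j) :=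
  Iff.rfl

noncomputable def liftScale (n j : ℕ) : ℝ := ((n + 1 : ℕ) : ℝ) / ((n + 1 - j : ℕ) : ℝ)

lemma liftScale_pos {n j : ℕ} (hj : j ≤ n) : 0 < liftScale n j :=
  div_pos (by positivity) (by norm_cast; omega)

lemma ofReal_liftScale (n j : ℕ) :
    ((liftScale n j : ℝ) : ℂ) = ((n + 1 : ℕ) : ℂ) / ((n + 1 - j : ℕ) : ℂ) := by
  simp only [liftScale, ofReal_div, ofReal_natCast]

lemma liftScale_mul_choose {n j : ℕ} (hj : j ≤ n) :
    liftScale n j * n.choose j = (n + 1).choose j := by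
  have hpos : ((n + 1 - j : ℕ) : ℝ) ≠ 0 := by exact_mod_cast (by omega : n + 1 - j ≠ 0)
  rw [liftScale, div_mul_eq_mul_div, div_eq_iff hpos, mul_comm]
  exact_mod_cast Nat.choose_mul_succ_eq n j

noncomputable def liftWitness (n k : ℕ) (β : ℕ → ℂ) (j : ℕ) : ℂ :=
  if j ≤ k then liftScale n j * β j
  else if j = k + 1 then β k + β (k + 1)
  else liftScale n (n + 1 - j) * β (j - 1)

section liftWitness

variable {n k : ℕ} {β y ystar : ℕ → ℂ} {q : ℂ}

lemma liftWitness_of_le {j : ℕ} (hj : j ≤ k) : liftWitness n k β j = liftScale n j * β j :=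
  if_pos hj

lemma liftWitness_succ : liftWitness n k β (k + 1) = β k + β (k + 1) := by
  simp [liftWitness]

lemma liftWitness_reflect (hk : n = 2 * k + 1) {j : ℕ} (hj : j ≤ k) :
    liftWitness n k β (n + 1 - j) = liftScale n j * β (n - j) := by
  simp only [liftWitness, if_neg (show ¬(n + 1 - j ≤ k) by omega),
    if_neg (show ¬(n + 1 - j = k + 1) by omega),
    show n + 1 - (n + 1 - j) = j by omega, show n + 1 - j - 1 = n - j by omega]

lemma gtildeCoord_liftWitness_pair (hk : n = 2 * k + 1) {i : ℕ} (hi : 1 ≤ i) (hik : i ≤ k)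
    (hβ : ∀ j, 1 ≤ j → j ≤ n - 1 → GtildeCoord q (y j) (β j) (β (n - j)) (n.choose j))
    (hyi : ystar i = liftScale n i * y i)
    (hyi' : ystar (n + 1 - i) = liftScale n i * y (n - i)) :
    GtildeCoord q (ystar i) (liftWitness n k β i) (liftWitness n k β (n + 1 - i))
        ((n + 1).choose i) ∧
      GtildeCoord q (ystar (n + 1 - i)) (liftWitness n k β (n + 1 - i)) (liftWitness n k β i)
        ((n + 1).choose (n + 1 - i)) := by
  have hc := liftScale_pos (n := n) (j := i) (by omega)
  have hlow := (hβ i hi (by omega)).ofReal_mul hc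
  have hhigh := (hβ (n - i) (by omega) (by omega)).ofReal_mul hc
  rw [Nat.sub_sub_self (by omega), Nat.choose_symm (by omega)] at hhigh
  rw [liftWitness_of_le hik, liftWitness_reflect hk hik, hyi, hyi', Nat.choose_symm (by omega),
    ← liftScale_mul_choose (by omega)]
  exact ⟨hlow, hhigh⟩

lemma gtildeCoord_liftWitness_middle (hk : n = 2 * k + 1) (hk1 : 1 ≤ k)
    (hβ : ∀ j, 1 ≤ j → j ≤ n - 1 → GtildeCoord q (y j) (β j) (β (n - j)) (n.choose j))
    (hmid : ystar (k + 1) = y k + y (k + 1)) :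
    GtildeCoord q (ystar (k + 1)) (liftWitness n k β (k + 1))
      (liftWitness n k β (n + 1 - (k + 1))) ((n + 1).choose (k + 1)) := by
  have hlow := hβ k hk1 (by omega)
  have hhigh := hβ (k + 1) (by omega) (by omega)
  rw [show n - k = k + 1 by omega] at hlow
  rw [show n - (k + 1) = k by omega] at hhigh
  rw [show n + 1 - (k + 1) = k + 1 by omega, liftWitness_succ, hmid, Nat.choose_succ_succ',
    Nat.cast_add]
  exact hlow.add_swap hhigh

end liftWitness

theorem stmt12 (n : ℕ) (hn : 3 ≤ n) (hno : Odd n) (y ystar : ℕ → ℂ) (q : ℂ)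
    (hy : inGtilde n y q)
    (hmid : ystar ((n + 1) / 2) = y ((n - 1) / 2) + y ((n + 1) / 2))
    (h1 : ∀ j, 1 ≤ j → j ≤ (n - 1) / 2 →
      ystar j = (((n + 1 : ℕ) : ℂ) / ((n + 1 - j : ℕ) : ℂ)) * y j ∧
      ystar (n + 1 - j) = (((n + 1 : ℕ) : ℂ) / ((n + 1 - j : ℕ) : ℂ)) * y (n - j)) :
    inGtilde (n + 1) ystar q := by
  obtain ⟨k, hk⟩ := hno
  rw [inGtilde_iff] at hy ⊢
  obtain ⟨hq, β, hβ⟩ := hy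
  rw [show (n + 1) / 2 = k + 1 by omega, show (n - 1) / 2 = k by omega] at hmid
  rw [show (n - 1) / 2 = k by omega] at h1
  simp only [← ofReal_liftScale] at h1
  have hpair (i : ℕ) (hi : 1 ≤ i) (hik : i ≤ k) :=
    gtildeCoord_liftWitness_pair hk hi hik hβ (h1 i hi hik).1 (h1 i hi hik).2
  refine ⟨hq, liftWitness n k β, fun j hj1 hj2 => ?_⟩
  rcases lt_trichotomy j (k + 1) with hlt | rfl | hgt
  · exact (hpair j hj1 (by omega)).1
  · exact gtildeCoord_liftWitness_middle hk (by omega) hβ hmid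
  · have h := (hpair (n + 1 - j) (by omega) (by omega)).2
    rwa [Nat.sub_sub_self (by omega)] at h
end

section
/- For n even and y = (y_1,…,y_{n-1},q) ∈ G̃_n, the point ǎy ∈ ℂ^{n−1} lies in G̃_{n−1}, where ǎy has last coordinate q and coordinates ǎy_j = ((n−j)/n)·y_j and ǎy_{n−1−j} = ((n−j)/n)·y_{n−j} for 1 ≤ j ≤ n/2 − 1 (so the coordinate y_{n/2} is dropped). -/
open Complex

/-!
Write `y j = β j + conj (β (n - j)) * q` with `‖β j‖ + ‖β (n - j)‖ < C(n, j)`. Rescaling the pair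
`(β j, β (n - j))` by `(n - j) / n` decomposes the pair `{j, n - 1 - j}` of `ǎy`, and the bound
becomes `(n - j) / n * C(n, j) = C(n - 1, j)`. As `n` is even, these pairs with
`1 ≤ j ≤ n / 2 - 1` cover all coordinates `1, …, n - 2` of `ǎy`.
-/

open ComplexConjugate

theorem Nat.cast_sub_div_mul_choose {n : ℕ} (hn : 0 < n) (j : ℕ) :
    ((n - j : ℕ) : ℝ) / n * n.choose j = (n - 1).choose j := by
  obtain ⟨m, rfl⟩ : ∃ m, n = m + 1 := ⟨n - 1, by omega⟩
  rw [div_mul_eq_mul_div, div_eq_iff (by positivity), mul_comm]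
  exact_mod_cast (Nat.choose_mul_succ_eq m j).symm

theorem inGtilde_of_pairs {m : ℕ} {y : ℕ → ℂ} {q : ℂ} (hq : ‖q‖ < 1)
    (β : ℕ → ℂ) (hβ : ∀ j, 1 ≤ j → 2 * j ≤ m →
      y j = β j + conj (β (m - j)) * q ∧ y (m - j) = β (m - j) + conj (β j) * q ∧
      ‖β j‖ + ‖β (m - j)‖ < (m.choose j : ℝ)) :
    inGtilde m y q := by
  refine ⟨hq, β, fun j hj1 hjm => ?_⟩
  by_cases hj : 2 * j ≤ m
  · exact ⟨(hβ j hj1 hj).1, (hβ j hj1 hj).2.2⟩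
  · obtain ⟨-, hy, hnorm⟩ := hβ (m - j) (by omega) (by omega)
    rw [Nat.sub_sub_self (by omega)] at hy hnorm
    rw [Nat.choose_symm (by omega), add_comm] at hnorm
    exact ⟨hy, hnorm⟩

theorem ofReal_mul_add_conj_mul (t : ℝ) (a b q : ℂ) :
    (t : ℂ) * (a + conj b * q) = t * a + conj (t * b) * q := by
  rw [map_mul, conj_ofReal]
  ring

theorem norm_ofReal_mul_add_norm_ofReal_mul_lt {t C : ℝ} (ht : 0 < t) {a b : ℂ}
    (h : ‖a‖ + ‖b‖ < C) : ‖(t : ℂ) * a‖ + ‖(t : ℂ) * b‖ < t * C := by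
  rw [norm_mul, norm_mul, norm_real, Real.norm_of_nonneg ht.le, ← mul_add]
  exact mul_lt_mul_of_pos_left h ht

theorem stmt13_general (n : ℕ) (hne : Even n) (y ycheck : ℕ → ℂ) (q : ℂ)
    (hy : inGtilde n y q)
    (h1 : ∀ j, 1 ≤ j → j ≤ n / 2 - 1 →
      ycheck j = (((n - j : ℕ) : ℂ) / ((n : ℕ) : ℂ)) * y j ∧
      ycheck (n - 1 - j) = (((n - j : ℕ) : ℂ) / ((n : ℕ) : ℂ)) * y (n - j)) :
    inGtilde (n - 1) ycheck q := by
  obtain ⟨hq, β, hβ⟩ := hy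
  obtain ⟨r, hr⟩ := hne
  set c : ℕ → ℝ := fun k => ((n - k : ℕ) : ℝ) / n with hc
  refine inGtilde_of_pairs hq
    (fun k => if 2 * k < n then (c k : ℂ) * β k else (c (n - 1 - k) : ℂ) * β (k + 1))
    fun k hk1 hk2 => ?_
  obtain ⟨hyk, hnorm⟩ := hβ k hk1 (by omega)
  obtain ⟨hyk', -⟩ := hβ (n - k) (by omega) (by omega)
  obtain ⟨hk, hk'⟩ := h1 k hk1 (by omega)
  have hck : ((n - k : ℕ) : ℂ) / ((n : ℕ) : ℂ) = (c k : ℂ) := by simp [hc]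
  rw [hck] at hk hk'
  have hidx : n - 1 - (n - 1 - k) = k := by omega
  have hidx' : n - 1 - k + 1 = n - k := by omega
  simp only [if_pos (show 2 * k < n by omega), if_neg (show ¬2 * (n - 1 - k) < n by omega),
    hidx, hidx', Nat.sub_sub_self (show k ≤ n by omega)] at hyk' ⊢
  refine ⟨by rw [hk, hyk, ofReal_mul_add_conj_mul],
    by rw [hk', hyk', ofReal_mul_add_conj_mul], ?_⟩
  rw [← Nat.cast_sub_div_mul_choose (by omega)]
  exact norm_ofReal_mul_add_norm_ofReal_mul_lt
    (div_pos (Nat.cast_pos.mpr (by omega)) (Nat.cast_pos.mpr (by omega))) hnorm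

theorem stmt13 (n : ℕ) (hn : 2 ≤ n) (hne : Even n) (y ycheck : ℕ → ℂ) (q : ℂ)
    (hy : inGtilde n y q)
    (h1 : ∀ j, 1 ≤ j → j ≤ n / 2 - 1 →
      ycheck j = (((n - j : ℕ) : ℂ) / ((n : ℕ) : ℂ)) * y j ∧
      ycheck (n - 1 - j) = (((n - j : ℕ) : ℂ) / ((n : ℕ) : ℂ)) * y (n - j)) :
    inGtilde (n - 1) ycheck q :=
  stmt13_general n hne y ycheck q hy h1
end

section
/- For n odd and y = (y_1,…,y_{n-1},q) ∈ G̃_n, the point ỹ ∈ ℂ^{n−1} lies in G̃_{n−1}, where ỹ has last coordinate q, middle coordinate (position (n−1)/2) equal to ((n+1)/(2n))·(y_{(n−1)/2} + y_{(n+1)/2})/2, and ỹ_j = ((n−j)/n)·y_j, ỹ_{n−1−j} = ((n−j)/n)·y_{n−j} for 1 ≤ j ≤ (n−3)/2. -/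
open Complex

/-!
Write `n = 2k + 1`. If `β` witnesses `y ∈ G̃_n`, the coordinates of `ỹ` away from the middle are
`y_j` (resp. `y_{n-j}`) scaled by `c_j = (n - j)/n`, so `c_j β` witnesses them, and the bound
`‖β_j‖ + ‖β_{n-j}‖ < C(n, j)` scales to `c_j C(n, j) = C(n - 1, j)`. The middle coordinate is
`c_k` times the average of `y_k = β_k + β̄_{k+1} q` and `y_{k+1} = β_{k+1} + β̄_k q`, which is
witnessed by the self-conjugate pair `s = (β_k + β_{k+1})/2`, with `2‖s‖ ≤ ‖β_k‖ + ‖β_{k+1}‖`.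
-/

def GtildeWitnessAt (m : ℕ) (y : ℕ → ℂ) (q : ℂ) (β : ℕ → ℂ) (j : ℕ) : Prop :=
  y j = β j + (starRingEnd ℂ) (β (m - j)) * q ∧ ‖β j‖ + ‖β (m - j)‖ < (m.choose j : ℝ)

noncomputable def contractionFactor (n j : ℕ) : ℝ := ((n - j : ℕ) : ℝ) / n

lemma contractionFactor_pos {n j : ℕ} (hj : j < n) : 0 < contractionFactor n j := by
  have : (0 : ℝ) < (n - j : ℕ) := by exact_mod_cast Nat.sub_pos_of_lt hj
  exact div_pos this (by exact_mod_cast Nat.zero_lt_of_lt hj)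

lemma contractionFactor_succ_mul_choose (n j : ℕ) :
    contractionFactor (n + 1) j * (n + 1).choose j = n.choose j := by
  have h := Nat.choose_mul_succ_eq n j
  unfold contractionFactor
  rw [div_mul_eq_mul_div, div_eq_iff (by positivity)]
  exact_mod_cast (h.trans (mul_comm _ _)).symm

lemma ofReal_contractionFactor (n j : ℕ) :
    (contractionFactor n j : ℂ) = ((n - j : ℕ) : ℂ) / (n : ℂ) := by
  simp [contractionFactor]

lemma ofReal_mul_decomposition {x a b q : ℂ} {c C : ℝ} (hc : 0 < c)
    (hx : x = a + (starRingEnd ℂ) b * q) (hab : ‖a‖ + ‖b‖ < C) :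
    (c : ℂ) * x = c * a + (starRingEnd ℂ) (c * b) * q ∧
      ‖(c : ℂ) * a‖ + ‖(c : ℂ) * b‖ < c * C := by
  refine ⟨by rw [hx, map_mul, conj_ofReal]; ring, ?_⟩
  simp only [norm_mul, norm_real, Real.norm_of_nonneg hc.le, ← mul_add]
  exact mul_lt_mul_of_pos_left hab hc

lemma average_decomposition {x x' a b q : ℂ} {C : ℝ}
    (hx : x = a + (starRingEnd ℂ) b * q) (hx' : x' = b + (starRingEnd ℂ) a * q)
    (hab : ‖a‖ + ‖b‖ < C) :
    (x + x') / 2 = (a + b) / 2 + (starRingEnd ℂ) ((a + b) / 2) * q ∧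
      ‖(a + b) / 2‖ + ‖(a + b) / 2‖ < C := by
  refine ⟨by rw [hx, hx', map_div₀, map_add, map_ofNat]; ring, ?_⟩
  rw [← two_mul, norm_div, Complex.norm_two, mul_div_cancel₀ _ two_ne_zero]
  exact (norm_add_le a b).trans_lt hab

section Contraction

variable (k : ℕ) (β : ℕ → ℂ)

noncomputable def contractedWitness (i : ℕ) : ℂ :=
  if i < k then contractionFactor (2 * k + 1) i * β i
  else if i = k then contractionFactor (2 * k + 1) k * ((β k + β (k + 1)) / 2)
  else contractionFactor (2 * k + 1) (2 * k - i) * β (i + 1)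

variable {k β} {y ytilde : ℕ → ℂ} {q : ℂ}

lemma contractedWitness_of_lt {j : ℕ} (hjk : j < k)
    (hβ : GtildeWitnessAt (2 * k + 1) y q β j)
    (hβ' : GtildeWitnessAt (2 * k + 1) y q β (2 * k + 1 - j))
    (hyt : ytilde j = contractionFactor (2 * k + 1) j * y j ∧
      ytilde (2 * k - j) = contractionFactor (2 * k + 1) j * y (2 * k + 1 - j)) :
    GtildeWitnessAt (2 * k) ytilde q (contractedWitness k β) j ∧
      GtildeWitnessAt (2 * k) ytilde q (contractedWitness k β) (2 * k - j) := by
  have hc := contractionFactor_pos (show j < 2 * k + 1 by omega)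
  have hchoose := contractionFactor_succ_mul_choose (2 * k) j
  have hlow : contractedWitness k β j = contractionFactor (2 * k + 1) j * β j := if_pos hjk
  have hhigh : contractedWitness k β (2 * k - j) =
      contractionFactor (2 * k + 1) j * β (2 * k + 1 - j) := by
    rw [contractedWitness, if_neg (by omega), if_neg (by omega), Nat.sub_sub_self (by omega),
      show 2 * k - j + 1 = 2 * k + 1 - j by omega]
  unfold GtildeWitnessAt at hβ hβ' ⊢
  rw [Nat.sub_sub_self (by omega)] at hβ'
  obtain ⟨hy, hb⟩ := ofReal_mul_decomposition hc hβ.1 hβ.2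
  obtain ⟨hy', hb'⟩ := ofReal_mul_decomposition hc hβ'.1 (by rw [add_comm]; exact hβ.2)
  refine ⟨?_, ?_⟩
  · rw [hlow, hhigh, hyt.1, ← hchoose]
    exact ⟨hy, hb⟩
  · rw [Nat.sub_sub_self (by omega), hlow, hhigh, hyt.2,
      Nat.choose_symm (by omega), ← hchoose]
    exact ⟨hy', hb'⟩

lemma contractedWitness_middle
    (hβ : GtildeWitnessAt (2 * k + 1) y q β k)
    (hβ' : GtildeWitnessAt (2 * k + 1) y q β (k + 1))
    (hyt : ytilde k = contractionFactor (2 * k + 1) k * ((y k + y (k + 1)) / 2)) :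
    GtildeWitnessAt (2 * k) ytilde q (contractedWitness k β) k := by
  have hc := contractionFactor_pos (show k < 2 * k + 1 by omega)
  have hchoose := contractionFactor_succ_mul_choose (2 * k) k
  unfold GtildeWitnessAt at hβ hβ' ⊢
  rw [show 2 * k + 1 - k = k + 1 by omega] at hβ
  rw [show 2 * k + 1 - (k + 1) = k by omega] at hβ'
  obtain ⟨hy, hb⟩ := average_decomposition hβ.1 hβ'.1 hβ.2
  have hmid : contractedWitness k β k =
      contractionFactor (2 * k + 1) k * ((β k + β (k + 1)) / 2) := by
    rw [contractedWitness, if_neg (lt_irrefl k), if_pos rfl]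
  rw [show 2 * k - k = k by omega, hmid, hyt, ← hchoose]
  exact ofReal_mul_decomposition hc hy hb

end Contraction

theorem stmt14_general (n : ℕ) (hno : Odd n) (y ytilde : ℕ → ℂ) (q : ℂ)
    (hy : inGtilde n y q)
    (hmid : ytilde ((n - 1) / 2) =
      (((n + 1 : ℕ) : ℂ) / ((2 * n : ℕ) : ℂ)) *
        ((y ((n - 1) / 2) + y ((n + 1) / 2)) / 2))
    (h1 : ∀ j, 1 ≤ j → j ≤ (n - 3) / 2 →
      ytilde j = (((n - j : ℕ) : ℂ) / ((n : ℕ) : ℂ)) * y j ∧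
      ytilde (n - 1 - j) = (((n - j : ℕ) : ℂ) / ((n : ℕ) : ℂ)) * y (n - j)) :
    inGtilde (n - 1) ytilde q := by
  obtain ⟨hq, β, hβ⟩ := hy
  obtain ⟨k, rfl⟩ := hno
  have hlow (i : ℕ) (hi : 1 ≤ i) (hik : i < k) :
      GtildeWitnessAt (2 * k) ytilde q (contractedWitness k β) i ∧
        GtildeWitnessAt (2 * k) ytilde q (contractedWitness k β) (2 * k - i) := by
    have hyt := h1 i hi (by omega)
    rw [show 2 * k + 1 - 1 - i = 2 * k - i by omega, ← ofReal_contractionFactor] at hyt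
    exact contractedWitness_of_lt hik (hβ i hi (by omega))
      (hβ (2 * k + 1 - i) (by omega) (by omega)) hyt
  have hcoef : (((2 * k + 1 + 1 : ℕ) : ℂ) / ((2 * (2 * k + 1) : ℕ) : ℂ)) =
      contractionFactor (2 * k + 1) k := by
    rw [ofReal_contractionFactor, show 2 * k + 1 - k = k + 1 by omega]
    push_cast
    field_simp
    ring
  rw [show (2 * k + 1 - 1) / 2 = k by omega, show (2 * k + 1 + 1) / 2 = k + 1 by omega,
    hcoef] at hmid
  refine ⟨hq, contractedWitness k β, fun j hj₁ hj₂ => ?_⟩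
  rw [Nat.add_sub_cancel] at hj₂ ⊢
  rcases lt_trichotomy j k with hjk | rfl | hjk
  · exact (hlow j hj₁ hjk).1
  · exact contractedWitness_middle (hβ j hj₁ (by omega)) (hβ (j + 1) (by omega) (by omega)) hmid
  · have hmirror := (hlow (2 * k - j) (by omega) (by omega)).2
    rwa [Nat.sub_sub_self (by omega)] at hmirror

theorem stmt14 (n : ℕ) (hn : 3 ≤ n) (hno : Odd n) (y ytilde : ℕ → ℂ) (q : ℂ)
    (hy : inGtilde n y q)
    (hmid : ytilde ((n - 1) / 2) =
      (((n + 1 : ℕ) : ℂ) / ((2 * n : ℕ) : ℂ)) *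
        ((y ((n - 1) / 2) + y ((n + 1) / 2)) / 2))
    (h1 : ∀ j, 1 ≤ j → j ≤ (n - 3) / 2 →
      ytilde j = (((n - j : ℕ) : ℂ) / ((n : ℕ) : ℂ)) * y j ∧
      ytilde (n - 1 - j) = (((n - j : ℕ) : ℂ) / ((n : ℕ) : ℂ)) * y (n - j)) :
    inGtilde (n - 1) ytilde q :=
  stmt14_general n hno y ytilde q hy hmid h1
end

section
/- For n even and y = (y_1,…,y_{n-1},q) ∈ G̃_n, the point y̲ = (y_1,…,y_{n/2}, y_{n/2}, y_{n/2+1},…,y_{n-1}, q) ∈ ℂ^{n+1} (the coordinate y_{n/2} duplicated) lies in G̃_{n+1}, and the map y ↦ y̲ is a holomorphic embedding of G̃_n into G̃_{n+1}. -/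
open Complex

/-- The extended symmetrized polydisc `G̃_m` as a subset of `ℂ^m`, where the point
`z` has coordinates `y_j = z (j-1)` for `1 ≤ j ≤ m-1` and `q = z (m-1)`. -/
def GtildeF (m : ℕ) : Set (Fin m → ℂ) :=
  {z | ∃ hm : 0 < m, ‖z ⟨m - 1, by omega⟩‖ < 1 ∧
    ∃ β : ℕ → ℂ, ∀ j, ∀ _h1 : 1 ≤ j, ∀ _h2 : j ≤ m - 1,
      z ⟨j - 1, by omega⟩ = β j + (starRingEnd ℂ) (β (m - j)) * z ⟨m - 1, by omega⟩ ∧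
      ‖β j‖ + ‖β (m - j)‖ < (m.choose j : ℝ)}

/-! The map `y ↦ y̲` is `z ↦ z ∘ Fin.predAbove p` with `p + 1 = n / 2`: it is a coordinate
projection, hence linear, and injective because `Fin.predAbove p` is onto. For membership in
`G̃_{n+1}`, reindex the coefficients `β` along the same duplication `τ` of indices; `τ` carries
`j ↦ n + 1 - j` to `j ↦ n - j` because the duplicated index is the middle one, and
`C(n, τ j) ≤ C(n + 1, j)` by Pascal's rule. -/

theorem Nat.choose_pred_le_choose_succ (n j : ℕ) : n.choose (j - 1) ≤ (n + 1).choose j := by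
  cases j with
  | zero => simp
  | succ j => simp [Nat.choose_succ_succ']

theorem Fin.val_predAbove {n : ℕ} (p : Fin n) (i : Fin (n + 1)) :
    (p.predAbove i : ℕ) = if (p : ℕ) < i then (i : ℕ) - 1 else i := by
  simp only [Fin.predAbove, Fin.lt_def, Fin.val_castSucc]
  split_ifs <;> simp

theorem analyticOnNhd_comp_right {𝕜 : Type*} [NontriviallyNormedField 𝕜] [CompleteSpace 𝕜]
    {ι κ : Type*} [Fintype ι] [Fintype κ] (σ : ι → κ) (s : Set (κ → 𝕜)) :
    AnalyticOnNhd 𝕜 (fun z : κ → 𝕜 => z ∘ σ) s :=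
  (LinearMap.funLeft 𝕜 𝕜 σ).toContinuousLinearMap.analyticOnNhd s

theorem mem_GtildeF_of_reindex {m m' : ℕ} (hm : 0 < m) (hm' : 0 < m') {z : Fin m → ℂ}
    {w : Fin m' → ℂ} (τ : ℕ → ℕ)
    (hτ : ∀ j, 1 ≤ j → j ≤ m' - 1 → 1 ≤ τ j ∧ τ j ≤ m - 1)
    (hτ_symm : ∀ j, 1 ≤ j → j ≤ m' - 1 → τ (m' - j) = m - τ j)
    (hchoose : ∀ j, 1 ≤ j → j ≤ m' - 1 → m.choose (τ j) ≤ m'.choose j)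
    (hq : w ⟨m' - 1, by omega⟩ = z ⟨m - 1, by omega⟩)
    (hy : ∀ j (h1 : 1 ≤ j) (h2 : j ≤ m' - 1),
      w ⟨j - 1, by omega⟩ = z ⟨τ j - 1, by have := hτ j h1 h2; omega⟩)
    (hz : z ∈ GtildeF m) : w ∈ GtildeF m' := by
  obtain ⟨_, hq_lt, β, hβ⟩ := hz
  refine ⟨hm', hq ▸ hq_lt, β ∘ τ, fun j h1 h2 => ?_⟩
  obtain ⟨hτ1, hτ2⟩ := hτ j h1 h2
  obtain ⟨hyβ, hnorm⟩ := hβ (τ j) hτ1 hτ2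
  simp only [Function.comp, hτ_symm j h1 h2, hq, hy j h1 h2]
  exact ⟨hyβ, hnorm.trans_le (by exact_mod_cast hchoose j h1 h2)⟩

theorem comp_predAbove_mem_GtildeF_succ {n : ℕ} (p : Fin n) (hp : 2 * (p + 1) = n)
    {z : Fin n → ℂ} (hz : z ∈ GtildeF n) : z ∘ p.predAbove ∈ GtildeF (n + 1) := by
  refine mem_GtildeF_of_reindex (by omega) (by omega) (fun j => if j ≤ p + 1 then j else j - 1)
    (by intros; split_ifs <;> omega) (by intros; split_ifs <;> omega) (fun j _ _ => ?_) ?_ ?_ hz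
  · split_ifs
    · exact Nat.choose_le_succ n j
    · exact Nat.choose_pred_le_choose_succ n j
  all_goals
    intros
    simp only [Function.comp_apply]
    congr 1
    ext
    rw [Fin.val_predAbove]
    split_ifs <;> simp only at * <;> omega

theorem stmt15 (n : ℕ) (hn : 2 ≤ n) (hne : Even n)
    (F : (Fin n → ℂ) → Fin (n + 1) → ℂ)
    (hF : ∀ (z : Fin n → ℂ) (i : Fin (n + 1)),
      F z i = if h : (i : ℕ) < n / 2 then z ⟨(i : ℕ), by omega⟩
        else z ⟨(i : ℕ) - 1, by have := i.isLt; omega⟩) :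
    Set.MapsTo F (GtildeF n) (GtildeF (n + 1)) ∧
    Function.Injective F ∧
    AnalyticOn ℂ F (GtildeF n) := by
  obtain ⟨r, hr⟩ := hne
  let p : Fin n := ⟨n / 2 - 1, by omega⟩
  have hp : 2 * ((p : ℕ) + 1) = n := by simp only [p]; omega
  have hF_eq : F = fun z => z ∘ p.predAbove := by
    funext z i
    rw [hF, Function.comp_apply]
    split_ifs <;> congr 1 <;> ext <;> rw [Fin.val_predAbove] <;> split_ifs <;> simp only at * <;> omega
  subst hF_eq
  exact ⟨fun _ hz => comp_predAbove_mem_GtildeF_succ p hp hz,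
    (Fin.predAbove_surjective p).injective_comp_right,
    (analyticOnNhd_comp_right _ _).analyticOn⟩
end

section
/- For n even and y = (y_1,…,y_n,q) ∈ G̃_{n+1}, the point ỹ ∈ ℂ^n lies in G̃_n, where ỹ has last coordinate q, middle coordinate (position n/2) equal to ((n/2+1)/(2(n+1)))·(y_{n/2} + y_{n/2+1}), and ỹ_j = ((n+1−j)/(n+1))·y_j, ỹ_{n−j} = ((n+1−j)/(n+1))·y_{n+1−j} for 1 ≤ j ≤ n/2 − 1. -/
open Complex

/-
Write `n = 2k` and `y_j = β_j + conj(β_{n+1-j}) q`. For `j < k` the pair `(y_j, y_{n+1-j})` is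
scaled by `r_j = (n+1-j)/(n+1)`, which turns the witnesses `(β_j, β_{n+1-j})` into witnesses for
the pair `(ỹ_j, ỹ_{n-j})` and the bound `C(n+1,j)` into `r_j C(n+1,j) = C(n,j)`. The two middle
coordinates `y_k, y_{k+1}` share the pair `(β_k, β_{k+1})`, so their sum is represented by
`β_k + β_{k+1}` paired with itself; scaling by `r_k / 2` gives the middle coordinate of `ỹ`.
-/

open ComplexConjugate

def IsSplitPair (q y₁ y₂ b₁ b₂ : ℂ) : Prop :=
  y₁ = b₁ + conj b₂ * q ∧ y₂ = b₂ + conj b₁ * q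

namespace IsSplitPair

variable {q y₁ y₂ b₁ b₂ : ℂ}

theorem ofReal_mul (h : IsSplitPair q y₁ y₂ b₁ b₂) (r : ℝ) :
    IsSplitPair q (r * y₁) (r * y₂) (r * b₁) (r * b₂) := by
  obtain ⟨h₁, h₂⟩ := h
  constructor <;> simp only [h₁, h₂, map_mul, conj_ofReal] <;> ring

theorem add_self (h : IsSplitPair q y₁ y₂ b₁ b₂) :
    IsSplitPair q (y₁ + y₂) (y₁ + y₂) (b₁ + b₂) (b₁ + b₂) := by
  obtain ⟨h₁, h₂⟩ := h
  constructor <;> simp only [h₁, h₂, map_add] <;> ring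

end IsSplitPair

/-- The conditions of `inGtilde` at `j` and at `m - j` are the same. -/
theorem inGtilde_iff_exists_two_mul_le (m : ℕ) (y : ℕ → ℂ) (q : ℂ) :
    inGtilde m y q ↔ ‖q‖ < 1 ∧ ∃ β : ℕ → ℂ, ∀ j, 1 ≤ j → 2 * j ≤ m →
      IsSplitPair q (y j) (y (m - j)) (β j) (β (m - j)) ∧
      ‖β j‖ + ‖β (m - j)‖ < m.choose j := by
  refine and_congr_right fun _ => exists_congr fun β => ⟨fun h j hj hjm => ?_, fun h j hj hjm => ?_⟩
  · obtain ⟨h₁, hb⟩ := h j hj (by omega)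
    obtain ⟨h₂, -⟩ := h (m - j) (by omega) (by omega)
    rw [Nat.sub_sub_self (by omega)] at h₂
    exact ⟨⟨h₁, h₂⟩, hb⟩
  · by_cases hj2 : 2 * j ≤ m
    · obtain ⟨⟨h₁, -⟩, hb⟩ := h j hj hj2
      exact ⟨h₁, hb⟩
    · obtain ⟨⟨-, h₂⟩, hb⟩ := h (m - j) (by omega) (by omega)
      rw [Nat.sub_sub_self (by omega)] at h₂ hb
      rw [Nat.choose_symm (by omega), add_comm] at hb
      exact ⟨h₂, hb⟩

noncomputable def chooseRatio (n j : ℕ) : ℝ := ((n + 1 - j : ℕ) : ℝ) / (n + 1)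

theorem chooseRatio_pos {n j : ℕ} (hj : j ≤ n) : 0 < chooseRatio n j := by
  unfold chooseRatio
  have : (0 : ℝ) < ((n + 1 - j : ℕ) : ℝ) := by exact_mod_cast (by omega : 0 < n + 1 - j)
  positivity

theorem chooseRatio_mul_choose_succ (n j : ℕ) :
    chooseRatio n j * (n + 1).choose j = n.choose j := by
  have h := congrArg (Nat.cast (R := ℝ)) (Nat.choose_mul_succ_eq n j)
  push_cast at h
  rw [chooseRatio, div_mul_eq_mul_div, div_eq_iff (by positivity)]
  linarith

theorem norm_ofReal_mul_add_norm_ofReal_mul {r : ℝ} (hr : 0 ≤ r) (b₁ b₂ : ℂ) :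
    ‖(r : ℂ) * b₁‖ + ‖(r : ℂ) * b₂‖ = r * (‖b₁‖ + ‖b₂‖) := by
  simp only [norm_mul, norm_real, Real.norm_of_nonneg hr]
  ring

theorem norm_chooseRatio_mul_add_lt_choose {n j : ℕ} (hj : j ≤ n) {b₁ b₂ : ℂ}
    (hb : ‖b₁‖ + ‖b₂‖ < (n + 1).choose j) :
    ‖(chooseRatio n j : ℂ) * b₁‖ + ‖(chooseRatio n j : ℂ) * b₂‖ < n.choose j := by
  rw [norm_ofReal_mul_add_norm_ofReal_mul (chooseRatio_pos hj).le,
    ← chooseRatio_mul_choose_succ]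
  exact mul_lt_mul_of_pos_left hb (chooseRatio_pos hj)

theorem norm_chooseRatio_div_two_mul_add_lt_choose {n j : ℕ} (hj : j ≤ n) {b₁ b₂ : ℂ}
    (hb : ‖b₁‖ + ‖b₂‖ < (n + 1).choose j) :
    ‖((chooseRatio n j / 2 : ℝ) : ℂ) * (b₁ + b₂)‖ + ‖((chooseRatio n j / 2 : ℝ) : ℂ) * (b₁ + b₂)‖
      < n.choose j := by
  have hr := chooseRatio_pos hj
  rw [norm_ofReal_mul_add_norm_ofReal_mul (by positivity), ← chooseRatio_mul_choose_succ]
  calc chooseRatio n j / 2 * (‖b₁ + b₂‖ + ‖b₁ + b₂‖)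
      ≤ chooseRatio n j * (‖b₁‖ + ‖b₂‖) := by nlinarith [norm_add_le b₁ b₂]
    _ < chooseRatio n j * (n + 1).choose j := mul_lt_mul_of_pos_left hb hr

theorem stmt16_general (n : ℕ) (hne : Even n) (y ytilde : ℕ → ℂ) (q : ℂ)
    (hy : inGtilde (n + 1) y q)
    (hmid : ytilde (n / 2) =
      (((n / 2 + 1 : ℕ) : ℂ) / ((2 * (n + 1) : ℕ) : ℂ)) * (y (n / 2) + y (n / 2 + 1)))
    (h1 : ∀ j, 1 ≤ j → j ≤ n / 2 - 1 →
      ytilde j = (((n + 1 - j : ℕ) : ℂ) / ((n + 1 : ℕ) : ℂ)) * y j ∧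
      ytilde (n - j) = (((n + 1 - j : ℕ) : ℂ) / ((n + 1 : ℕ) : ℂ)) * y (n + 1 - j)) :
    inGtilde n ytilde q := by
  obtain ⟨k, rfl⟩ := hne
  have hk : (k + k) / 2 = k := by omega
  rw [hk] at hmid h1
  obtain ⟨hq, β, hβ⟩ := (inGtilde_iff_exists_two_mul_le _ _ _).1 hy
  set r := chooseRatio (k + k)
  have hr : ∀ j, (((k + k + 1 - j : ℕ) : ℂ) / ((k + k + 1 : ℕ) : ℂ)) = (r j : ℂ) := by
    intro j; simp [r, chooseRatio]
  refine (inGtilde_iff_exists_two_mul_le _ _ _).2 ⟨hq, fun j =>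
    if j < k then r j * β j
    else if j = k then (r k / 2 : ℝ) * (β k + β (k + 1))
    else r (k + k - j) * β (j + 1), fun j hj hj2 => ?_⟩
  obtain hjk | rfl := (by omega : j < k ∨ k = j)
  · obtain ⟨hpair, hb⟩ := hβ j hj (by omega)
    obtain ⟨hy₁, hy₂⟩ := h1 j hj (by omega)
    have hidx : k + k + 1 - j = k + k - j + 1 := by omega
    have hsub : k + k - (k + k - j) = j := by omega
    simp only [if_pos hjk, if_neg (by omega : ¬ k + k - j < k), if_neg (by omega : k + k - j ≠ k),
      hsub, hy₁, hy₂, hr]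
    rw [hidx] at hpair hb ⊢
    exact ⟨hpair.ofReal_mul _, norm_chooseRatio_mul_add_lt_choose (by omega) hb⟩
  · obtain ⟨hpair, hb⟩ := hβ k hj (by omega)
    have hidx : k + k + 1 - k = k + 1 := by omega
    have hcoef : ((k + 1 : ℕ) : ℂ) / ((2 * (k + k + 1) : ℕ) : ℂ) = ((r k / 2 : ℝ) : ℂ) := by
      simp only [r, chooseRatio, hidx]; push_cast; field_simp
    simp only [lt_irrefl, if_false, if_true, Nat.add_sub_cancel, hmid, hcoef]
    rw [hidx] at hpair hb
    exact ⟨hpair.add_self.ofReal_mul _, norm_chooseRatio_div_two_mul_add_lt_choose (by omega) hb⟩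

theorem stmt16 (n : ℕ) (hn : 2 ≤ n) (hne : Even n) (y ytilde : ℕ → ℂ) (q : ℂ)
    (hy : inGtilde (n + 1) y q)
    (hmid : ytilde (n / 2) =
      (((n / 2 + 1 : ℕ) : ℂ) / ((2 * (n + 1) : ℕ) : ℂ)) * (y (n / 2) + y (n / 2 + 1)))
    (h1 : ∀ j, 1 ≤ j → j ≤ n / 2 - 1 →
      ytilde j = (((n + 1 - j : ℕ) : ℂ) / ((n + 1 : ℕ) : ℂ)) * y j ∧
      ytilde (n - j) = (((n + 1 - j : ℕ) : ℂ) / ((n + 1 : ℕ) : ℂ)) * y (n + 1 - j)) :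
    inGtilde n ytilde q :=
  stmt16_general n hne y ytilde q hy hmid h1
end

section
/- Let n ≥ 2, x = (x_1,…,x_n) ∈ ℂ^n, and suppose ψ : 𝔻 → G̃_n ⊂ ℂ^n is analytic with ψ(0) = 0 and ψ'(0) = x, and assume moreover that for each λ ∈ 𝔻 \ {0} and each 1 ≤ j ≤ n−1, with C = C(n,j): C·|ψ_j(λ) − conj(ψ_{n−j}(λ))·ψ_n(λ)| + |ψ_j(λ)·ψ_{n−j}(λ) − C²·ψ_n(λ)| ≤ |λ|·(C² − |ψ_{n−j}(λ)|²). Then max over 1 ≤ j ≤ n−1 of |x_j|/C(n,j), plus |x_n|, is at most 1. -/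
open Complex Metric

open ComplexConjugate Filter Topology

/-!
Divide the hypothesis by `|λ|` and let `λ → 0`: since `ψ_j(λ)/λ → x_j`, `ψ_n(λ)/λ → x_n` and
`ψ_{n-j}(λ) → 0`, it becomes `C |x_j| + C² |x_n| ≤ C²` in the limit.
-/

theorem tendsto_div_self_of_hasDerivAt_zero {𝕜 : Type*} [NontriviallyNormedField 𝕜]
    {f : 𝕜 → 𝕜} {a : 𝕜} (hf : HasDerivAt f a 0) (hf0 : f 0 = 0) :
    Tendsto (fun z => f z / z) (𝓝[≠] 0) (𝓝 a) :=
  (hasDerivAt_iff_tendsto_slope.mp hf).congr fun z => by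
    simp [slope_def_field, hf0, div_eq_inv_mul]

theorem mul_norm_add_sq_mul_norm_le_sq_of_tendsto {p q r : ℂ → ℂ} {a c : ℂ} {C : ℝ}
    (hp : Tendsto (fun z => p z / z) (𝓝[≠] 0) (𝓝 a))
    (hq : Tendsto q (𝓝[≠] 0) (𝓝 0))
    (hr : Tendsto (fun z => r z / z) (𝓝[≠] 0) (𝓝 c))
    (hle : ∀ᶠ z in 𝓝[≠] 0,
      C * ‖p z - conj (q z) * r z‖ + ‖p z * q z - (C : ℂ) ^ 2 * r z‖ ≤
        ‖z‖ * (C ^ 2 - ‖q z‖ ^ 2)) :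
    C * ‖a‖ + C ^ 2 * ‖c‖ ≤ C ^ 2 := by
  have hconj : Tendsto (fun z => conj (q z)) (𝓝[≠] 0) (𝓝 0) := by
    simpa [Function.comp_def] using (continuous_conj.tendsto 0).comp hq
  have hlhs := ((hp.sub (hconj.mul hr)).norm.const_mul C).add
    ((hp.mul hq).sub (hr.const_mul ((C : ℂ) ^ 2))).norm
  have hrhs := (tendsto_const_nhds (x := C ^ 2)).sub (hq.norm.pow 2)
  simp only [mul_zero, zero_sub, sub_zero, zero_mul, norm_neg, norm_mul, norm_pow,
    Complex.norm_real, Real.norm_eq_abs, sq_abs, norm_zero, ne_eq, OfNat.ofNat_ne_zero,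
    not_false_eq_true, zero_pow] at hlhs hrhs
  refine le_of_tendsto_of_tendsto hlhs hrhs ?_
  filter_upwards [hle, self_mem_nhdsWithin] with z hz (hz0 : z ≠ 0)
  have hzpos : 0 < ‖z‖ := norm_pos_iff.mpr hz0
  have hdiv₁ : p z / z - conj (q z) * (r z / z) = (p z - conj (q z) * r z) / z := by ring
  have hdiv₂ : p z / z * q z - (C : ℂ) ^ 2 * (r z / z) = (p z * q z - (C : ℂ) ^ 2 * r z) / z := by
    ring
  calc C * ‖p z / z - conj (q z) * (r z / z)‖ + ‖p z / z * q z - (C : ℂ) ^ 2 * (r z / z)‖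
      = (C * ‖p z - conj (q z) * r z‖ + ‖p z * q z - (C : ℂ) ^ 2 * r z‖) / ‖z‖ := by
        rw [hdiv₁, hdiv₂, norm_div, norm_div]
        ring
    _ ≤ C ^ 2 - ‖q z‖ ^ 2 := by
        rw [div_le_iff₀ hzpos]
        linarith

theorem stmt19_general (n : ℕ) (ψ : ℕ → ℂ → ℂ) (x : ℕ → ℂ)
    (hdiff : ∀ i, 1 ≤ i → i ≤ n → DifferentiableOn ℂ (ψ i) (ball (0 : ℂ) 1))
    (hψ0 : ∀ i, 1 ≤ i → i ≤ n → ψ i 0 = 0)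
    (hderiv : ∀ i, 1 ≤ i → i ≤ n → deriv (ψ i) 0 = x i)
    (hbound : ∀ z ∈ ball (0 : ℂ) 1, z ≠ 0 → ∀ j, 1 ≤ j → j ≤ n - 1 →
      (n.choose j : ℝ) *
          ‖ψ j z - (starRingEnd ℂ) (ψ (n - j) z) * ψ n z‖ +
        ‖ψ j z * ψ (n - j) z - (n.choose j : ℂ) ^ 2 * ψ n z‖ ≤
      ‖z‖ * ((n.choose j : ℝ) ^ 2 - (‖ψ (n - j) z‖) ^ 2)) :
    ∀ j, 1 ≤ j → j ≤ n - 1 →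
      ‖x j‖ / (n.choose j : ℝ) + ‖x n‖ ≤ 1 := by
  intro j hj1 hj2
  have hψ' (i : ℕ) (hi1 : 1 ≤ i) (hi2 : i ≤ n) : HasDerivAt (ψ i) (x i) 0 := by
    rw [← hderiv i hi1 hi2]
    exact ((hdiff i hi1 hi2).differentiableAt (ball_mem_nhds 0 one_pos)).hasDerivAt
  have hdual : Tendsto (ψ (n - j)) (𝓝[≠] 0) (𝓝 0) := by
    have hcont := (hψ' (n - j) (by omega) (by omega)).continuousAt.tendsto
    rw [hψ0 (n - j) (by omega) (by omega)] at hcont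
    exact hcont.mono_left nhdsWithin_le_nhds
  have hle : ∀ᶠ z in 𝓝[≠] (0 : ℂ),
      (n.choose j : ℝ) * ‖ψ j z - conj (ψ (n - j) z) * ψ n z‖ +
          ‖ψ j z * ψ (n - j) z - ((n.choose j : ℝ) : ℂ) ^ 2 * ψ n z‖ ≤
        ‖z‖ * ((n.choose j : ℝ) ^ 2 - ‖ψ (n - j) z‖ ^ 2) := by
    filter_upwards [nhdsWithin_le_nhds (ball_mem_nhds 0 one_pos), self_mem_nhdsWithin]
      with z hz hz0
    exact_mod_cast hbound z hz hz0 j hj1 hj2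
  have hlim := mul_norm_add_sq_mul_norm_le_sq_of_tendsto
    (tendsto_div_self_of_hasDerivAt_zero (hψ' j hj1 (by omega)) (hψ0 j hj1 (by omega))) hdual
    (tendsto_div_self_of_hasDerivAt_zero (hψ' n (by omega) le_rfl) (hψ0 n (by omega) le_rfl)) hle
  have hC : (0 : ℝ) < n.choose j := by exact_mod_cast Nat.choose_pos (by omega)
  rw [div_add' _ _ _ hC.ne', div_le_one hC]
  nlinarith [norm_nonneg (x j), norm_nonneg (x n)]

theorem stmt19 (n : ℕ) (hn : 2 ≤ n) (ψ : ℕ → ℂ → ℂ) (x : ℕ → ℂ)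
    (hdiff : ∀ i, 1 ≤ i → i ≤ n → DifferentiableOn ℂ (ψ i) (ball (0 : ℂ) 1))
    (hmap : ∀ z ∈ ball (0 : ℂ) 1, inGtilde n (fun j => ψ j z) (ψ n z))
    (hψ0 : ∀ i, 1 ≤ i → i ≤ n → ψ i 0 = 0)
    (hderiv : ∀ i, 1 ≤ i → i ≤ n → deriv (ψ i) 0 = x i)
    (hbound : ∀ z ∈ ball (0 : ℂ) 1, z ≠ 0 → ∀ j, 1 ≤ j → j ≤ n - 1 →
      (n.choose j : ℝ) *
          ‖ψ j z - (starRingEnd ℂ) (ψ (n - j) z) * ψ n z‖ +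
        ‖ψ j z * ψ (n - j) z - (n.choose j : ℂ) ^ 2 * ψ n z‖ ≤
      ‖z‖ * ((n.choose j : ℝ) ^ 2 - (‖ψ (n - j) z‖) ^ 2)) :
    ∀ j, 1 ≤ j → j ≤ n - 1 →
      ‖x j‖ / (n.choose j : ℝ) + ‖x n‖ ≤ 1 :=
  stmt19_general n ψ x hdiff hψ0 hderiv hbound
end
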